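/- arXiv:1305.5145 — 9 statements merged into one kernel-verified Lean document; each statement's English description precedes it below -/
import Mathlib

section
/- A sequence P of nonnegative integers is mirror bigraphic if and only if the pair (P,P) is bigraphic. That is, if there exists a bipartite graph whose two stable sets both have degree sequence P, then there exists a mirror bipartite graph whose two stable sets both have degree sequence P. -/
open Finset

/-- Degree of a left vertex in a bipartite graph given by a Boolean relation. -/
def degA {α β : Type} [Fintype β] (R : α → β → Bool) (a : α) : ℕ :=
  (univ.filter fun b => R a b = true).card

/-- Degree of a right vertex. -/
def degB {α β : Type} [Fintype α] (R : α → β → Bool) (b : β) : ℕ :=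
  (univ.filter fun a => R a b = true).card

/-- A bipartite graph is mirror if there is a bijection φ between the stable sets
such that `u φ(v)` is an edge iff `φ(u) v` is an edge. -/
def IsMirror {α β : Type} (R : α → β → Bool) : Prop :=
  ∃ φ : α ≃ β, ∀ u v : α, R u (φ v) = R v (φ u)

/-- Multiset of left degrees. -/
def degSeqA {α β : Type} [Fintype α] [Fintype β] (R : α → β → Bool) : Multiset ℕ :=
  Multiset.map (degA R) Finset.univ.val

/-- Multiset of right degrees. -/
def degSeqB {α β : Type} [Fintype α] [Fintype β] (R : α → β → Bool) : Multiset ℕ :=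
  Multiset.map (degB R) Finset.univ.val

/-- A pair of multisets is bigraphic if realized by the two sides of a bipartite graph. -/
def IsBigraphic (P Q : Multiset ℕ) : Prop :=
  ∃ (n m : ℕ) (R : Fin n → Fin m → Bool), degSeqA R = P ∧ degSeqB R = Q

/-- `P` is mirror bigraphic if a mirror bipartite graph realizes `(P, P)`. -/
def IsMirrorBigraphic (P : Multiset ℕ) : Prop :=
  ∃ (n : ℕ) (R : Fin n → Fin n → Bool),
    IsMirror R ∧ degSeqA R = P ∧ degSeqB R = P

/-- `P` is loop graphic: realized by an `l`-graph (symmetric Boolean relation, a loop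
at `a` being `L a a = true`, contributing exactly 1 to the degree of `a`). -/
def IsLoopGraphic (P : Multiset ℕ) : Prop :=
  ∃ (n : ℕ) (L : Fin n → Fin n → Bool), (∀ a b, L a b = L b a) ∧
    Multiset.map (fun a => (univ.filter fun b => L a b = true).card) Finset.univ.val = P

section MB

variable {n : ℕ}

/-- asymmetric pairs -/
def asymF (R : Fin n → Fin n → Bool) : Finset (Fin n × Fin n) :=
  univ.filter fun p => R p.1 p.2 = true ∧ R p.2 p.1 = false

def outD (R : Fin n → Fin n → Bool) (v : Fin n) : ℕ :=
  (univ.filter fun w => R v w = true ∧ R w v = false).card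

def inD (R : Fin n → Fin n → Bool) (v : Fin n) : ℕ :=
  (univ.filter fun w => R w v = true ∧ R v w = false).card

lemma rowcol_split (R : Fin n → Fin n → Bool) (v : Fin n)
    (h : (univ.filter fun b => R v b = true).card = (univ.filter fun a => R a v = true).card) :
    outD R v = inD R v := by
  classical
  have h1 := Finset.card_filter_add_card_filter_not
    (s := univ.filter fun b : Fin n => R v b = true) (p := fun w => R w v = true)
  have h2 := Finset.card_filter_add_card_filter_not
    (s := univ.filter fun a : Fin n => R a v = true) (p := fun w => R v w = true)
  rw [Finset.filter_filter, Finset.filter_filter] at h1 h2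
  have e1 : (univ.filter fun w : Fin n => R v w = true ∧ R w v = true)
      = (univ.filter fun w : Fin n => R w v = true ∧ R v w = true) := by
    apply Finset.filter_congr; intro w _; simp [and_comm]
  have e2 : outD R v = (univ.filter fun w : Fin n => R v w = true ∧ ¬ R w v = true).card := by
    unfold outD; congr 1; apply Finset.filter_congr; intro w _; simp
  have e3 : inD R v = (univ.filter fun w : Fin n => R w v = true ∧ ¬ R v w = true).card := by
    unfold inD; congr 1; apply Finset.filter_congr; intro w _; simp
  rw [e1] at h1
  rw [e2, e3]
  omega

lemma card_filter_swap {N : ℕ} (p q : Fin N → Bool) (x y : Fin N) (hxy : x ≠ y)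
    (hx : p x = true) (hy : p y = false)
    (h : ∀ b, q b = true ↔ ((p b = true ∧ b ≠ x) ∨ b = y)) :
    (univ.filter fun b => q b = true).card = (univ.filter fun b => p b = true).card := by
  classical
  have hset : (univ.filter fun b => q b = true)
      = insert y ((univ.filter fun b => p b = true).erase x) := by
    ext b
    simp only [mem_filter, mem_univ, true_and, mem_insert, mem_erase, h b]
    tauto
  rw [hset, card_insert_of_notMem (by simp [hy]), card_erase_of_mem (by simp [hx])]
  have : 0 < (univ.filter fun b : Fin N => p b = true).card := card_pos.2 ⟨x, by simp [hx]⟩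
  omega

lemma card_filter_congr {N : ℕ} (p q : Fin N → Bool) (h : ∀ b, q b = p b) :
    (univ.filter fun b => q b = true).card = (univ.filter fun b => p b = true).card := by
  congr 1; apply Finset.filter_congr; intro b _; rw [h b]

lemma mod_succ_lt {k : ℕ} (t : ℕ) (hk : 0 < k) : (t + 1) % k < k := Nat.mod_lt _ hk

lemma mod_succ_inj {k t u : ℕ} (ht : t < k) (hu : u < k) (h : (t+1) % k = (u+1) % k) : t = u := by
  have h2 : t % k = u % k := Nat.ModEq.add_right_cancel' 1 h
  rwa [Nat.mod_eq_of_lt ht, Nat.mod_eq_of_lt hu] at h2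

lemma mod_succ_ne_self {k t : ℕ} (hk : 2 ≤ k) (ht : t < k) : (t+1) % k ≠ t := by
  intro h
  have h2 : t % k = (t+1) % k := by rw [h, Nat.mod_eq_of_lt ht]
  have h3 : k ∣ (t+1) - t := (Nat.modEq_iff_dvd' (by omega)).1 h2
  simp at h3; omega

lemma mod_two_succ_ne_self {k t : ℕ} (hk : 3 ≤ k) (ht : t < k) : ((t+1) % k + 1) % k ≠ t := by
  intro h
  rw [Nat.mod_add_mod] at h
  have h2 : (t + 2) % k = t % k := by rw [show t+1+1 = t+2 by ring] at h; rw [h, Nat.mod_eq_of_lt ht]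
  have h3 : k ∣ (t+2) - t := (Nat.modEq_iff_dvd' (by omega)).1 h2.symm
  simp at h3
  have := Nat.le_of_dvd (by norm_num) h3
  omega

/-- predecessor on the cycle -/
def pr (k s : ℕ) : ℕ := (s + (k-1)) % k

lemma pr_lt {k : ℕ} (s : ℕ) (hk : 0 < k) : pr k s < k := Nat.mod_lt _ hk

lemma succ_pr {k s : ℕ} (hk : 0 < k) (hs : s < k) : (pr k s + 1) % k = s := by
  unfold pr
  rw [Nat.mod_add_mod, show s + (k-1) + 1 = s + k by omega, Nat.add_mod_right,
    Nat.mod_eq_of_lt hs]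

lemma succ_eq_iff_pr {k s t : ℕ} (hk : 0 < k) (ht : t < k) (hs : s < k) :
    (t+1) % k = s ↔ t = pr k s :=
  ⟨fun h => mod_succ_inj ht (pr_lt s hk) (h.trans (succ_pr hk hs).symm),
   fun h => h ▸ succ_pr hk hs⟩

lemma pr_ne_self {k s : ℕ} (hk : 2 ≤ k) (hs : s < k) : pr k s ≠ s := by
  intro h
  have := succ_pr (k := k) (by omega) hs
  rw [h] at this
  exact mod_succ_ne_self hk hs this

lemma exists_next (R : Fin n → Fin n → Bool) (hbal : ∀ v, outD R v = inD R v) {u x : Fin n}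
    (h1 : R u x = true) (h2 : R x u = false) : ∃ y, R x y = true ∧ R y x = false := by
  have hin : 0 < inD R x := card_pos.2 ⟨u, by simp [inD, h1, h2]⟩
  have hout : 0 < outD R x := (hbal x) ▸ hin
  obtain ⟨y, hy⟩ := card_pos.1 hout
  exact ⟨y, by simpa [outD] using hy⟩

set_option maxHeartbeats 1000000 in
lemma cycle_of_mem (R : Fin n → Fin n → Bool) (l : List (Fin n)) (hnd : l.Nodup)
    (hch : l.Chain' (fun a b => R a b = true ∧ R b a = false)) (hl2 : 2 ≤ l.length)
    (hne : l ≠ []) (y : Fin n)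
    (hy1 : R (l.getLast hne) y = true) (hy2 : R y (l.getLast hne) = false)
    (hmem : y ∈ l) :
    ∃ (k : ℕ) (w : ℕ → Fin n), 3 ≤ k ∧
      (∀ s t, s < k → t < k → w s = w t → s = t) ∧
      (∀ t, t < k → R (w t) (w ((t+1) % k)) = true ∧ R (w ((t+1) % k)) (w t) = false) := by
  obtain ⟨s, hs, hsy⟩ := List.mem_iff_getElem.1 hmem
  have hlast : l.getLast hne = l[l.length-1]'(by omega) := List.getLast_eq_getElem hne
  have harc : ∀ t (h : t + 1 < l.length), R (l[t]'(by omega)) (l[t+1]'(by omega)) = true ∧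
      R (l[t+1]'(by omega)) (l[t]'(by omega)) = false := by
    unfold List.Chain' at hch
    rw [List.isChain_iff_getElem] at hch
    intro t h
    simpa [List.get_eq_getElem] using hch t (by omega)
  have hs1 : s ≠ l.length - 1 := by
    intro h
    have e : l[s]'(by omega) = l[l.length-1]'(by omega) := by congr 1 <;> omega
    rw [← hsy, e, ← hlast] at hy1 hy2
    rw [hy1] at hy2; exact Bool.noConfusion hy2
  have hs2 : s ≠ l.length - 2 := by
    intro h
    have e : l[s]'(by omega) = l[l.length-2]'(by omega) := by congr 1 <;> omega
    have h2 := (harc (l.length-2) (by omega)).2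
    have e2 : l[l.length-2+1]'(by omega) = l[l.length-1]'(by omega) := by congr 1 <;> omega
    simp only [e2] at h2
    rw [hlast, ← hsy, e] at hy1
    rw [hy1] at h2; exact Bool.noConfusion h2
  have hsle : s + 3 ≤ l.length := by omega
  refine ⟨l.length - s, fun t => l.getD (s + t) y, by omega, ?_, ?_⟩
  · intro a b ha hb hab
    have hab' : l.getD (s + a) y = l.getD (s + b) y := hab
    rw [List.getD_eq_getElem l y (show s + a < l.length by omega),
        List.getD_eq_getElem l y (show s + b < l.length by omega)] at hab'
    have := (List.Nodup.getElem_inj_iff hnd).1 hab'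
    omega
  · intro t ht
    show R (l.getD (s + t) y) (l.getD (s + ((t+1) % (l.length - s))) y) = true ∧
        R (l.getD (s + ((t+1) % (l.length - s))) y) (l.getD (s + t) y) = false
    by_cases h : t + 1 < l.length - s
    · have hm : (t+1) % (l.length-s) = t+1 := Nat.mod_eq_of_lt h
      rw [hm]
      rw [List.getD_eq_getElem l y (show s + t < l.length by omega),
          List.getD_eq_getElem l y (show s + (t+1) < l.length by omega)]
      have e2 : l[s+(t+1)]'(by omega) = l[s+t+1]'(by omega) := by congr 1 <;> omega
      rw [e2]
      exact harc (s+t) (by omega)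
    · have hm : (t+1) % (l.length-s) = 0 := by rw [show t+1 = l.length-s by omega, Nat.mod_self]
      rw [hm]
      rw [List.getD_eq_getElem l y (show s + t < l.length by omega),
          List.getD_eq_getElem l y (show s + 0 < l.length by omega)]
      have e1 : l[s+t]'(by omega) = l[l.length-1]'(by omega) := by congr 1 <;> omega
      have e2 : l[s+0]'(by omega) = y := by simpa using hsy
      rw [e1, e2, ← hlast]
      exact ⟨hy1, hy2⟩

lemma exists_cycle_aux (R : Fin n → Fin n → Bool) (hbal : ∀ v, outD R v = inD R v) :
    ∀ (m : ℕ) (l : List (Fin n)), l.Nodup →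
      l.Chain' (fun a b => R a b = true ∧ R b a = false) →
      2 ≤ l.length → n ≤ m + l.length →
      ∃ (k : ℕ) (w : ℕ → Fin n), 3 ≤ k ∧
        (∀ s t, s < k → t < k → w s = w t → s = t) ∧
        (∀ t, t < k → R (w t) (w ((t+1) % k)) = true ∧ R (w ((t+1) % k)) (w t) = false) := by
  intro m
  induction m with
  | zero =>
    intro l hnd hch hl2 hbound
    have hne : l ≠ [] := by intro h; rw [h] at hl2; simp at hl2
    -- last element has an in-neighbour, hence an out-neighbour
    have hlast : l.getLast hne = l[l.length-1]'(by omega) := List.getLast_eq_getElem hne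
    have harc : R (l[l.length-2]'(by omega)) (l.getLast hne) = true ∧
        R (l.getLast hne) (l[l.length-2]'(by omega)) = false := by
      unfold List.Chain' at hch
      rw [List.isChain_iff_getElem] at hch
      have h0 := hch (l.length - 2) (by omega)
      have e : l[l.length-2+1]'(by omega) = l[l.length-1]'(by omega) := by congr 1 <;> omega
      rw [e] at h0
      rw [hlast]
      exact h0
    obtain ⟨y, hy1, hy2⟩ := exists_next R hbal harc.1 harc.2
    have hmem : y ∈ l := by
      have hcard : l.toFinset.card = l.length := List.toFinset_card_of_nodup hnd
      have : l.toFinset = univ := Finset.eq_univ_of_card _ (by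
        have : l.length ≤ Fintype.card (Fin n) := List.Nodup.length_le_card hnd
        simp only [Fintype.card_fin] at *
        omega)
      have : y ∈ l.toFinset := this ▸ mem_univ y
      simpa using this
    exact cycle_of_mem R l hnd hch hl2 hne y hy1 hy2 hmem
  | succ m ih =>
    intro l hnd hch hl2 hbound
    have hne : l ≠ [] := by intro h; rw [h] at hl2; simp at hl2
    have hlast : l.getLast hne = l[l.length-1]'(by omega) := List.getLast_eq_getElem hne
    have harc : R (l[l.length-2]'(by omega)) (l.getLast hne) = true ∧
        R (l.getLast hne) (l[l.length-2]'(by omega)) = false := by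
      unfold List.Chain' at hch
      rw [List.isChain_iff_getElem] at hch
      have h0 := hch (l.length - 2) (by omega)
      have e : l[l.length-2+1]'(by omega) = l[l.length-1]'(by omega) := by congr 1 <;> omega
      rw [e] at h0
      rw [hlast]
      exact h0
    obtain ⟨y, hy1, hy2⟩ := exists_next R hbal harc.1 harc.2
    by_cases hmem : y ∈ l
    · exact cycle_of_mem R l hnd hch hl2 hne y hy1 hy2 hmem
    · refine ih (l ++ [y]) ?_ ?_ (by simp; omega) (by simp; omega)
      · simp [List.nodup_append, hnd, hmem]
        rintro a ha rfl; exact hmem ha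
      · unfold List.Chain'
        rw [List.isChain_append]
        refine ⟨hch, List.isChain_singleton y, ?_⟩
        intro a ha b hb
        rw [List.getLast?_eq_getLast hne] at ha
        simp at ha hb
        rw [← ha, ← hb] at *
        exact ⟨hy1, hy2⟩

lemma exists_cycle (R : Fin n → Fin n → Bool) (hbal : ∀ v, outD R v = inD R v)
    {i j : Fin n} (hij1 : R i j = true) (hij2 : R j i = false) :
    ∃ (k : ℕ) (w : ℕ → Fin n), 3 ≤ k ∧
      (∀ s t, s < k → t < k → w s = w t → s = t) ∧
      (∀ t, t < k → R (w t) (w ((t+1) % k)) = true ∧ R (w ((t+1) % k)) (w t) = false) := by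
  have hij : i ≠ j := by intro h; subst h; rw [hij1] at hij2; exact Bool.noConfusion hij2
  exact exists_cycle_aux R hbal n [i, j] (by simp [hij]) (by simp [List.Chain', hij1, hij2]) (by simp)
    (by simp)

lemma surgeryP3 (R : Fin n → Fin n → Bool) (k : ℕ) (w : ℕ → Fin n) (hk3 : 3 ≤ k)
    (hinj : ∀ s t, s < k → t < k → w s = w t → s = t)
    (harc : ∀ t, t < k → R (w t) (w ((t+1) % k)) = true ∧ R (w ((t+1) % k)) (w t) = false)
    (hloop : ∀ t, t < k → R (w t) (w t) = true) :
    ∃ R' : Fin n → Fin n → Bool,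
      (∀ a, degA R' a = degA R a) ∧ (∀ b, degB R' b = degB R b) ∧
      asymF R' ⊂ asymF R := by
  classical
  have hk0 : 0 < k := by omega
  have hk2 : 2 ≤ k := by omega
  refine ⟨fun a b =>
    if ∃ t, t < k ∧ a = w t ∧ b = w t then false
    else if ∃ t, t < k ∧ a = w ((t+1) % k) ∧ b = w t then true
    else R a b, ?_, ?_, ?_⟩
  · -- rows
    intro a
    by_cases hac : ∃ s, s < k ∧ a = w s
    · obtain ⟨s, hs, rfl⟩ := hac
      refine card_filter_swap _ _ (w s) (w (pr k s))
          (fun h => absurd (hinj s (pr k s) hs (pr_lt s hk0) h) (Ne.symm (pr_ne_self hk2 hs)))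
          (hloop s hs) ?_ ?_
      · have h2 := (harc (pr k s) (pr_lt s hk0)).2
        rwa [succ_pr hk0 hs] at h2
      · intro b
        beta_reduce
        by_cases hb1 : b = w s
        · subst hb1
          rw [if_pos ⟨s, hs, rfl, rfl⟩]
          constructor
          · intro h; exact absurd h (by simp)
          · rintro (⟨-, hne⟩ | he)
            · exact absurd rfl hne
            · exact absurd (hinj _ _ (pr_lt s hk0) hs (he.symm)) (pr_ne_self hk2 hs)
        · by_cases hb2 : b = w (pr k s)
          · subst hb2
            rw [if_neg, if_pos ⟨pr k s, pr_lt s hk0, by rw [succ_pr hk0 hs], rfl⟩]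
            · simp
            · rintro ⟨t, ht, h1, h2⟩
              exact hb1 (by rw [h2, ← h1])
          · rw [if_neg, if_neg]
            · constructor
              · intro h; exact Or.inl ⟨h, hb1⟩
              · rintro (⟨h, -⟩ | he)
                · exact h
                · exact absurd he hb2
            · rintro ⟨t, ht, h1, h2⟩
              apply hb2
              rw [h2]
              congr 1
              exact (succ_eq_iff_pr hk0 ht hs).1 (hinj _ _ (mod_succ_lt t hk0) hs h1.symm)
            · rintro ⟨t, ht, h1, h2⟩
              exact hb1 (h2.trans h1.symm)
    · apply card_filter_congr
      intro b
      beta_reduce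
      rw [if_neg, if_neg]
      · rintro ⟨t, ht, h1, h2⟩; exact hac ⟨(t+1) % k, mod_succ_lt t hk0, h1⟩
      · rintro ⟨t, ht, h1, h2⟩; exact hac ⟨t, ht, h1⟩
  · -- cols
    intro b
    by_cases hbc : ∃ s, s < k ∧ b = w s
    · obtain ⟨s, hs, rfl⟩ := hbc
      refine card_filter_swap (fun a => R a (w s)) _ (w s) (w ((s+1) % k))
          (fun h => absurd (hinj s ((s+1) % k) hs (mod_succ_lt s hk0) h)
            (Ne.symm (mod_succ_ne_self hk2 hs)))
          (hloop s hs) ((harc s hs).2) ?_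
      intro a
      beta_reduce
      by_cases ha1 : a = w s
      · subst ha1
        rw [if_pos ⟨s, hs, rfl, rfl⟩]
        constructor
        · intro h; exact absurd h (by simp)
        · rintro (⟨-, hne⟩ | he)
          · exact absurd rfl hne
          · exact absurd (hinj _ _ hs (mod_succ_lt s hk0) he).symm
              (mod_succ_ne_self hk2 hs)
      · by_cases ha2 : a = w ((s+1) % k)
        · subst ha2
          rw [if_neg, if_pos ⟨s, hs, rfl, rfl⟩]
          · simp
          · rintro ⟨t, ht, h1, h2⟩
            exact ha1 (h1.trans h2.symm)
        · rw [if_neg, if_neg]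
          · constructor
            · intro h; exact Or.inl ⟨h, ha1⟩
            · rintro (⟨h, -⟩ | he)
              · exact h
              · exact absurd he ha2
          · rintro ⟨t, ht, h1, h2⟩
            have : t = s := hinj t s ht hs h2.symm
            exact ha2 (by rw [h1, this])
          · rintro ⟨t, ht, h1, h2⟩
            have : t = s := hinj t s ht hs h2.symm
            exact ha1 (by rw [h1, this])
    · apply card_filter_congr
      intro a
      beta_reduce
      rw [if_neg, if_neg]
      · rintro ⟨t, ht, h1, h2⟩; exact hbc ⟨t, ht, h2⟩
      · rintro ⟨t, ht, h1, h2⟩; exact hbc ⟨t, ht, h2⟩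
  · -- asym
    refine (Finset.ssubset_iff_of_subset ?_).2
      ⟨(w 0, w ((0+1) % k)), ?_, ?_⟩
    · rintro ⟨a, b⟩ hp
      simp only [asymF, mem_filter, mem_univ, true_and] at hp ⊢
      obtain ⟨hp1, hp2⟩ := hp
      beta_reduce at hp1 hp2
      by_cases hC1 : ∃ t, t < k ∧ a = w t ∧ b = w t
      · rw [if_pos hC1] at hp1; exact Bool.noConfusion hp1
      rw [if_neg hC1] at hp1
      by_cases hC2 : ∃ t, t < k ∧ a = w ((t+1) % k) ∧ b = w t
      · exfalso
        obtain ⟨t, ht, rfl, rfl⟩ := hC2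
        rw [if_neg ?_, if_neg ?_] at hp2
        · rw [(harc t ht).1] at hp2; exact Bool.noConfusion hp2
        · rintro ⟨u, hu, h1, h2⟩
          have e1 : (t+1) % k = u := hinj _ _ (mod_succ_lt t hk0) hu h2
          have e2 : (u+1) % k = t := (hinj _ _ (mod_succ_lt u hk0) ht h1.symm)
          rw [← e1] at e2
          exact mod_two_succ_ne_self hk3 ht e2
        · rintro ⟨u, hu, h1, h2⟩
          have e1 : t = u := hinj t u ht hu h1
          have e2 : (t+1) % k = u := hinj _ _ (mod_succ_lt t hk0) hu h2
          rw [← e1] at e2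
          exact mod_succ_ne_self hk2 ht e2
      rw [if_neg hC2] at hp1
      refine ⟨hp1, ?_⟩
      by_cases hC1' : ∃ t, t < k ∧ b = w t ∧ a = w t
      · obtain ⟨t, ht, h1, h2⟩ := hC1'
        exact absurd ⟨t, ht, h2, h1⟩ hC1
      rw [if_neg hC1'] at hp2
      by_cases hC2' : ∃ t, t < k ∧ b = w ((t+1) % k) ∧ a = w t
      · rw [if_pos hC2'] at hp2; exact Bool.noConfusion hp2
      · rw [if_neg hC2'] at hp2; exact hp2
    · simp only [asymF, mem_filter, mem_univ, true_and]
      exact harc 0 hk0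
    · simp only [asymF, mem_filter, mem_univ, true_and]
      have hval : (if ∃ t, t < k ∧ w ((0+1) % k) = w t ∧ w 0 = w t then false
          else if ∃ t, t < k ∧ w ((0+1) % k) = w ((t+1) % k) ∧ w 0 = w t then true
          else R (w ((0+1) % k)) (w 0)) = true := by
        rw [if_neg, if_pos ⟨0, hk0, rfl, rfl⟩]
        rintro ⟨u, hu, h1, h2⟩
        have e1 : (0+1) % k = u := hinj _ _ (mod_succ_lt 0 hk0) hu h1
        have e2 : (0:ℕ) = u := hinj 0 u hk0 hu h2
        rw [← e2] at e1
        exact mod_succ_ne_self hk2 hk0 e1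
      rintro ⟨-, h2⟩
      rw [hval] at h2
      exact Bool.noConfusion h2

lemma pr_eq {k s : ℕ} (hk0 : 0 < k) (hs : s < k) :
    pr k s = if s = 0 then k - 1 else s - 1 := by
  unfold pr
  split
  · subst ‹s = 0›; rw [Nat.zero_add, Nat.mod_eq_of_lt (by omega)]
  · rw [show s + (k-1) = (s-1) + k by omega, Nat.add_mod_right, Nat.mod_eq_of_lt (by omega)]

lemma succ_eq {k s : ℕ} (hk0 : 0 < k) (hs : s < k) :
    (s + 1) % k = if s = k - 1 then 0 else s + 1 := by
  split
  · subst ‹s = k - 1›; rw [show k - 1 + 1 = k by omega, Nat.mod_self]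
  · rw [Nat.mod_eq_of_lt (by omega)]

lemma succ_ne_pr {k s : ℕ} (hk3 : 3 ≤ k) (hs : s < k) : (s + 1) % k ≠ pr k s := by
  rw [pr_eq (by omega) hs, succ_eq (by omega) hs]
  split <;> split <;> omega

lemma surgeryP1 (R : Fin n → Fin n → Bool) (k : ℕ) (w : ℕ → Fin n) (hk3 : 3 ≤ k)
    (hke : k % 2 = 0)
    (hinj : ∀ s t, s < k → t < k → w s = w t → s = t)
    (harc : ∀ t, t < k → R (w t) (w ((t+1) % k)) = true ∧ R (w ((t+1) % k)) (w t) = false) :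
    ∃ R' : Fin n → Fin n → Bool,
      (∀ a, degA R' a = degA R a) ∧ (∀ b, degB R' b = degB R b) ∧
      asymF R' ⊂ asymF R := by
  classical
  have hk0 : 0 < k := by omega
  have hk2 : 2 ≤ k := by omega
  -- parity of pr
  have hpr : ∀ s, s < k → (pr k s) % 2 = (s + 1) % 2 := by
    intro s hs
    rw [pr_eq hk0 hs]
    split <;> omega
  refine ⟨fun a b =>
    if ∃ t, t < k ∧ t % 2 = 1 ∧ a = w t ∧ b = w ((t+1) % k) then false
    else if ∃ t, t < k ∧ t % 2 = 0 ∧ a = w ((t+1) % k) ∧ b = w t then true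
    else R a b, ?_, ?_, ?_⟩
  · -- rows
    intro a
    by_cases hac : ∃ s, s < k ∧ a = w s
    · obtain ⟨s, hs, rfl⟩ := hac
      by_cases hso : s % 2 = 1
      · refine card_filter_swap _ _ (w ((s+1) % k)) (w (pr k s))
            (fun h => absurd (hinj _ _ (mod_succ_lt s hk0) (pr_lt s hk0) h) (succ_ne_pr hk3 hs))
            ((harc s hs).1) ?_ ?_
        · have h2 := (harc (pr k s) (pr_lt s hk0)).2
          rwa [succ_pr hk0 hs] at h2
        · intro b
          beta_reduce
          by_cases hb1 : b = w ((s+1) % k)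
          · subst hb1
            rw [if_pos ⟨s, hs, hso, rfl, rfl⟩]
            constructor
            · intro h; exact absurd h (by simp)
            · rintro (⟨-, hne⟩ | he)
              · exact absurd rfl hne
              · exact absurd (hinj _ _ (mod_succ_lt s hk0) (pr_lt s hk0) he)
                  (succ_ne_pr hk3 hs)
          · by_cases hb2 : b = w (pr k s)
            · subst hb2
              rw [if_neg, if_pos ⟨pr k s, pr_lt s hk0, by rw [hpr s hs]; omega,
                  by rw [succ_pr hk0 hs], rfl⟩]
              · simp
              · rintro ⟨t, ht, hto, h1, h2⟩
                have e : t = s := hinj t s ht hs h1.symm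
                subst e
                exact hb1 h2
            · rw [if_neg, if_neg]
              · constructor
                · intro h; exact Or.inl ⟨h, hb1⟩
                · rintro (⟨h, -⟩ | he)
                  · exact h
                  · exact absurd he hb2
              · rintro ⟨t, ht, hto, h1, h2⟩
                have e : (t+1) % k = s := hinj _ _ (mod_succ_lt t hk0) hs h1.symm
                have e2 : t = pr k s := (succ_eq_iff_pr hk0 ht hs).1 e
                exact hb2 (by rw [h2, e2])
              · rintro ⟨t, ht, hto, h1, h2⟩
                have e : t = s := hinj t s ht hs h1.symm
                subst e
                exact hb1 h2
      · apply card_filter_congr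
        intro b
        beta_reduce
        rw [if_neg, if_neg]
        · rintro ⟨t, ht, hto, h1, h2⟩
          have e : (t+1) % k = s := hinj _ _ (mod_succ_lt t hk0) hs h1.symm
          have e2 : t = pr k s := (succ_eq_iff_pr hk0 ht hs).1 e
          subst e2
          rw [hpr s hs] at hto
          omega
        · rintro ⟨t, ht, hto, h1, h2⟩
          have e : t = s := hinj t s ht hs h1.symm
          subst e
          exact hso hto
    · apply card_filter_congr
      intro b
      beta_reduce
      rw [if_neg, if_neg]
      · rintro ⟨t, ht, hto, h1, h2⟩; exact hac ⟨(t+1) % k, mod_succ_lt t hk0, h1⟩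
      · rintro ⟨t, ht, hto, h1, h2⟩; exact hac ⟨t, ht, h1⟩
  · -- cols
    intro b
    by_cases hbc : ∃ s, s < k ∧ b = w s
    · obtain ⟨s, hs, rfl⟩ := hbc
      by_cases hse : s % 2 = 0
      · refine card_filter_swap (fun a => R a (w s)) _ (w (pr k s)) (w ((s+1) % k))
            (fun h => absurd (hinj _ _ (pr_lt s hk0) (mod_succ_lt s hk0) h)
              (Ne.symm (succ_ne_pr hk3 hs))) ?_ ((harc s hs).2) ?_
        · have h1 := (harc (pr k s) (pr_lt s hk0)).1
          rwa [succ_pr hk0 hs] at h1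
        · intro a
          beta_reduce
          by_cases ha1 : a = w (pr k s)
          · subst ha1
            rw [if_pos ⟨pr k s, pr_lt s hk0, by rw [hpr s hs]; omega,
                rfl, by rw [succ_pr hk0 hs]⟩]
            constructor
            · intro h; exact absurd h (by simp)
            · rintro (⟨-, hne⟩ | he)
              · exact absurd rfl hne
              · exact absurd (hinj _ _ (pr_lt s hk0) (mod_succ_lt s hk0) he)
                  (Ne.symm (succ_ne_pr hk3 hs))
          · by_cases ha2 : a = w ((s+1) % k)
            · subst ha2
              rw [if_neg, if_pos ⟨s, hs, hse, rfl, rfl⟩]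
              · simp
              · rintro ⟨t, ht, hto, h1, h2⟩
                have e : (t+1) % k = s := hinj _ _ (mod_succ_lt t hk0) hs h2.symm
                have e2 : t = pr k s := (succ_eq_iff_pr hk0 ht hs).1 e
                subst e2
                have e3 : (s+1) % k = pr k s := hinj _ _ (mod_succ_lt s hk0) (pr_lt s hk0) h1
                exact succ_ne_pr hk3 hs e3
            · rw [if_neg, if_neg]
              · constructor
                · intro h; exact Or.inl ⟨h, ha1⟩
                · rintro (⟨h, -⟩ | he)
                  · exact h
                  · exact absurd he ha2
              · rintro ⟨t, ht, hto, h1, h2⟩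
                have e : t = s := hinj t s ht hs h2.symm
                subst e
                exact ha2 h1
              · rintro ⟨t, ht, hto, h1, h2⟩
                have e : (t+1) % k = s := hinj _ _ (mod_succ_lt t hk0) hs h2.symm
                have e2 : t = pr k s := (succ_eq_iff_pr hk0 ht hs).1 e
                subst e2
                exact ha1 h1
      · apply card_filter_congr
        intro a
        beta_reduce
        rw [if_neg, if_neg]
        · rintro ⟨t, ht, hto, h1, h2⟩
          have e : t = s := hinj t s ht hs h2.symm
          subst e
          omega
        · rintro ⟨t, ht, hto, h1, h2⟩
          have e : (t+1) % k = s := hinj _ _ (mod_succ_lt t hk0) hs h2.symm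
          have e2 : t = pr k s := (succ_eq_iff_pr hk0 ht hs).1 e
          subst e2
          rw [hpr s hs] at hto
          omega
    · apply card_filter_congr
      intro a
      beta_reduce
      rw [if_neg, if_neg]
      · rintro ⟨t, ht, hto, h1, h2⟩; exact hbc ⟨t, ht, h2⟩
      · rintro ⟨t, ht, hto, h1, h2⟩; exact hbc ⟨(t+1) % k, mod_succ_lt t hk0, h2⟩
  · -- asym
    refine (Finset.ssubset_iff_of_subset ?_).2
      ⟨(w 0, w ((0+1) % k)), ?_, ?_⟩
    · rintro ⟨a, b⟩ hp
      simp only [asymF, mem_filter, mem_univ, true_and] at hp ⊢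
      obtain ⟨hp1, hp2⟩ := hp
      beta_reduce at hp1 hp2
      by_cases hC1 : ∃ t, t < k ∧ t % 2 = 1 ∧ a = w t ∧ b = w ((t+1) % k)
      · rw [if_pos hC1] at hp1; exact Bool.noConfusion hp1
      rw [if_neg hC1] at hp1
      by_cases hC2 : ∃ t, t < k ∧ t % 2 = 0 ∧ a = w ((t+1) % k) ∧ b = w t
      · exfalso
        obtain ⟨t, ht, hte, rfl, rfl⟩ := hC2
        rw [if_neg ?_, if_neg ?_] at hp2
        · rw [(harc t ht).1] at hp2; exact Bool.noConfusion hp2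
        · rintro ⟨u, hu, hue, h1, h2⟩
          have e1 : (t+1) % k = u := hinj _ _ (mod_succ_lt t hk0) hu h2
          have e2 : (u+1) % k = t := hinj _ _ (mod_succ_lt u hk0) ht h1.symm
          rw [← e1] at e2
          exact mod_two_succ_ne_self hk3 ht e2
        · rintro ⟨u, hu, huo, h1, h2⟩
          have e1 : t = u := hinj t u ht hu h1
          omega
      rw [if_neg hC2] at hp1
      refine ⟨hp1, ?_⟩
      by_cases hC1' : ∃ t, t < k ∧ t % 2 = 1 ∧ b = w t ∧ a = w ((t+1) % k)
      · exfalso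
        obtain ⟨t, ht, hto, rfl, rfl⟩ := hC1'
        rw [(harc t ht).2] at hp1
        exact Bool.noConfusion hp1
      rw [if_neg hC1'] at hp2
      by_cases hC2' : ∃ t, t < k ∧ t % 2 = 0 ∧ b = w ((t+1) % k) ∧ a = w t
      · rw [if_pos hC2'] at hp2; exact Bool.noConfusion hp2
      · rw [if_neg hC2'] at hp2; exact hp2
    · simp only [asymF, mem_filter, mem_univ, true_and]
      exact harc 0 hk0
    · simp only [asymF, mem_filter, mem_univ, true_and]
      have hval : (if ∃ t, t < k ∧ t % 2 = 1 ∧ w ((0+1) % k) = w t ∧ w 0 = w ((t+1) % k) then false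
          else if ∃ t, t < k ∧ t % 2 = 0 ∧ w ((0+1) % k) = w ((t+1) % k) ∧ w 0 = w t then true
          else R (w ((0+1) % k)) (w 0)) = true := by
        rw [if_neg, if_pos ⟨0, hk0, rfl, rfl, rfl⟩]
        rintro ⟨u, hu, huo, h1, h2⟩
        have e1 : (0+1) % k = u := hinj _ _ (mod_succ_lt 0 hk0) hu h1
        have e2 : (u+1) % k = 0 := (hinj _ _ (mod_succ_lt u hk0) hk0 h2.symm)
        rw [← e1] at e2
        exact mod_two_succ_ne_self hk3 hk0 e2
      rintro ⟨-, h2⟩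
      rw [hval] at h2
      exact Bool.noConfusion h2

lemma surgeryP2 (R : Fin n → Fin n → Bool) (k : ℕ) (w : ℕ → Fin n) (hk3 : 3 ≤ k)
    (hko : k % 2 = 1)
    (hinj : ∀ s t, s < k → t < k → w s = w t → s = t)
    (harc : ∀ t, t < k → R (w t) (w ((t+1) % k)) = true ∧ R (w ((t+1) % k)) (w t) = false)
    (hnl : R (w 0) (w 0) = false) :
    ∃ R' : Fin n → Fin n → Bool,
      (∀ a, degA R' a = degA R a) ∧ (∀ b, degB R' b = degB R b) ∧
      asymF R' ⊂ asymF R := by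
  classical
  have hk0 : 0 < k := by omega
  have hk2 : 2 ≤ k := by omega
  have hpr : ∀ s, s < k → (pr k s) % 2 = (if s = 0 then 0 else (s + 1) % 2) := by
    intro s hs
    rw [pr_eq hk0 hs]
    split <;> omega
  refine ⟨fun a b =>
    if a = w 0 ∧ b = w 0 then true
    else if ∃ t, t < k ∧ t % 2 = 0 ∧ a = w t ∧ b = w ((t+1) % k) then false
    else if ∃ t, t < k ∧ t % 2 = 1 ∧ a = w ((t+1) % k) ∧ b = w t then true
    else R a b, ?_, ?_, ?_⟩
  · -- rows
    intro a
    by_cases hac : ∃ s, s < k ∧ a = w s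
    · obtain ⟨s, hs, rfl⟩ := hac
      by_cases hs0 : s = 0
      · subst hs0
        refine card_filter_swap _ _ (w ((0+1) % k)) (w 0)
            (fun h => absurd (hinj _ _ (mod_succ_lt 0 hk0) hk0 h) (mod_succ_ne_self hk2 hk0))
            ((harc 0 hk0).1) hnl ?_
        intro b
        beta_reduce
        by_cases hb0 : b = w 0
        · subst hb0
          rw [if_pos ⟨rfl, rfl⟩]
          simp
        · by_cases hb1 : b = w ((0+1) % k)
          · subst hb1
            rw [if_neg (fun h => hb0 ?_), if_pos ⟨0, hk0, rfl, rfl, rfl⟩]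
            · constructor
              · intro h; exact absurd h (by simp)
              · rintro (⟨-, hne⟩ | he)
                · exact absurd rfl hne
                · exact absurd he hb0
            · exact h.2
          · rw [if_neg (fun h => hb0 h.2), if_neg, if_neg]
            · constructor
              · intro h; exact Or.inl ⟨h, hb1⟩
              · rintro (⟨h, -⟩ | he)
                · exact h
                · exact absurd he hb0
            · rintro ⟨t, ht, hto, h1, h2⟩
              have e : (t+1) % k = 0 := (hinj _ _ (mod_succ_lt t hk0) hk0 h1.symm)
              have e2 : t = pr k 0 := (succ_eq_iff_pr hk0 ht hk0).1 e
              subst e2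
              rw [hpr 0 hk0] at hto
              simp at hto
            · rintro ⟨t, ht, hte, h1, h2⟩
              have e : t = 0 := hinj t 0 ht hk0 h1.symm
              subst e
              exact hb1 h2
      · by_cases hse : s % 2 = 0
        · refine card_filter_swap _ _ (w ((s+1) % k)) (w (pr k s))
              (fun h => absurd (hinj _ _ (mod_succ_lt s hk0) (pr_lt s hk0) h)
                (succ_ne_pr hk3 hs))
              ((harc s hs).1) ?_ ?_
          · have h2 := (harc (pr k s) (pr_lt s hk0)).2
            rwa [succ_pr hk0 hs] at h2
          · intro b
            beta_reduce
            have hL : ¬ (w s = w 0 ∧ b = w 0) := fun h => hs0 (hinj s 0 hs hk0 h.1)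
            by_cases hb1 : b = w ((s+1) % k)
            · subst hb1
              rw [if_neg hL, if_pos ⟨s, hs, hse, rfl, rfl⟩]
              constructor
              · intro h; exact absurd h (by simp)
              · rintro (⟨-, hne⟩ | he)
                · exact absurd rfl hne
                · exact absurd (hinj _ _ (mod_succ_lt s hk0) (pr_lt s hk0) he)
                    (succ_ne_pr hk3 hs)
            · by_cases hb2 : b = w (pr k s)
              · subst hb2
                rw [if_neg hL, if_neg, if_pos ⟨pr k s, pr_lt s hk0,
                    by rw [hpr s hs]; simp [hs0]; omega, by rw [succ_pr hk0 hs], rfl⟩]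
                · simp
                · rintro ⟨t, ht, hte, h1, h2⟩
                  have e : t = s := hinj t s ht hs h1.symm
                  subst e
                  exact hb1 h2
              · rw [if_neg hL, if_neg, if_neg]
                · constructor
                  · intro h; exact Or.inl ⟨h, hb1⟩
                  · rintro (⟨h, -⟩ | he)
                    · exact h
                    · exact absurd he hb2
                · rintro ⟨t, ht, hto, h1, h2⟩
                  have e : (t+1) % k = s := hinj _ _ (mod_succ_lt t hk0) hs h1.symm
                  have e2 : t = pr k s := (succ_eq_iff_pr hk0 ht hs).1 e
                  exact hb2 (by rw [h2, e2])
                · rintro ⟨t, ht, hte, h1, h2⟩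
                  have e : t = s := hinj t s ht hs h1.symm
                  subst e
                  exact hb1 h2
        · apply card_filter_congr
          intro b
          beta_reduce
          rw [if_neg (fun h => hs0 (hinj s 0 hs hk0 h.1)), if_neg, if_neg]
          · rintro ⟨t, ht, hto, h1, h2⟩
            have e : (t+1) % k = s := hinj _ _ (mod_succ_lt t hk0) hs h1.symm
            have e2 : t = pr k s := (succ_eq_iff_pr hk0 ht hs).1 e
            subst e2
            rw [hpr s hs] at hto
            simp [hs0] at hto
            omega
          · rintro ⟨t, ht, hte, h1, h2⟩
            have e : t = s := hinj t s ht hs h1.symm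
            subst e
            exact hse hte
    · apply card_filter_congr
      intro b
      beta_reduce
      rw [if_neg (fun h => hac ⟨0, hk0, h.1⟩), if_neg, if_neg]
      · rintro ⟨t, ht, hto, h1, h2⟩; exact hac ⟨(t+1) % k, mod_succ_lt t hk0, h1⟩
      · rintro ⟨t, ht, hte, h1, h2⟩; exact hac ⟨t, ht, h1⟩
  · -- cols
    intro b
    by_cases hbc : ∃ s, s < k ∧ b = w s
    · obtain ⟨s, hs, rfl⟩ := hbc
      by_cases hs0 : s = 0
      · subst hs0
        refine card_filter_swap (fun a => R a (w 0)) _ (w (pr k 0)) (w 0)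
            (fun h => absurd (hinj _ _ (pr_lt 0 hk0) hk0 h) (pr_ne_self hk2 hk0)) ?_ hnl ?_
        · have h1 := (harc (pr k 0) (pr_lt 0 hk0)).1
          rwa [succ_pr hk0 hk0] at h1
        · intro a
          beta_reduce
          by_cases ha0 : a = w 0
          · subst ha0
            rw [if_pos ⟨rfl, rfl⟩]
            simp
          · by_cases ha1 : a = w (pr k 0)
            · subst ha1
              rw [if_neg (fun h => ha0 ?_), if_pos ⟨pr k 0, pr_lt 0 hk0,
                  by rw [hpr 0 hk0]; simp, rfl, by rw [succ_pr hk0 hk0]⟩]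
              · constructor
                · intro h; exact absurd h (by simp)
                · rintro (⟨-, hne⟩ | he)
                  · exact absurd rfl hne
                  · exact absurd he ha0
              · exact h.1
            · rw [if_neg (fun h => ha0 h.1), if_neg, if_neg]
              · constructor
                · intro h; exact Or.inl ⟨h, ha1⟩
                · rintro (⟨h, -⟩ | he)
                  · exact h
                  · exact absurd he ha0
              · rintro ⟨t, ht, hto, h1, h2⟩
                have e : t = 0 := hinj t 0 ht hk0 h2.symm
                subst e
                simp at hto
              · rintro ⟨t, ht, hte, h1, h2⟩
                have e : (t+1) % k = 0 := hinj _ _ (mod_succ_lt t hk0) hk0 h2.symm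
                have e2 : t = pr k 0 := (succ_eq_iff_pr hk0 ht hk0).1 e
                subst e2
                exact ha1 h1
      · by_cases hso : s % 2 = 1
        · refine card_filter_swap (fun a => R a (w s)) _ (w (pr k s)) (w ((s+1) % k))
              (fun h => absurd (hinj _ _ (pr_lt s hk0) (mod_succ_lt s hk0) h)
                (Ne.symm (succ_ne_pr hk3 hs))) ?_ ((harc s hs).2) ?_
          · have h1 := (harc (pr k s) (pr_lt s hk0)).1
            rwa [succ_pr hk0 hs] at h1
          · intro a
            beta_reduce
            have hL : ∀ a : Fin n, ¬ (a = w 0 ∧ w s = w 0) :=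
              fun a h => hs0 (hinj s 0 hs hk0 h.2)
            by_cases ha1 : a = w (pr k s)
            · subst ha1
              rw [if_neg (hL _), if_pos ⟨pr k s, pr_lt s hk0,
                  by rw [hpr s hs]; simp [hs0]; omega, rfl, by rw [succ_pr hk0 hs]⟩]
              constructor
              · intro h; exact absurd h (by simp)
              · rintro (⟨-, hne⟩ | he)
                · exact absurd rfl hne
                · exact absurd (hinj _ _ (pr_lt s hk0) (mod_succ_lt s hk0) he)
                    (Ne.symm (succ_ne_pr hk3 hs))
            · by_cases ha2 : a = w ((s+1) % k)
              · subst ha2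
                rw [if_neg (hL _), if_neg, if_pos ⟨s, hs, hso, rfl, rfl⟩]
                · simp
                · rintro ⟨t, ht, hte, h1, h2⟩
                  have e : (t+1) % k = s := hinj _ _ (mod_succ_lt t hk0) hs h2.symm
                  have e2 : t = pr k s := (succ_eq_iff_pr hk0 ht hs).1 e
                  subst e2
                  exact absurd (hinj _ _ (mod_succ_lt s hk0) (pr_lt s hk0) h1)
                    (succ_ne_pr hk3 hs)
              · rw [if_neg (hL _), if_neg, if_neg]
                · constructor
                  · intro h; exact Or.inl ⟨h, ha1⟩
                  · rintro (⟨h, -⟩ | he)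
                    · exact h
                    · exact absurd he ha2
                · rintro ⟨t, ht, hto, h1, h2⟩
                  have e : t = s := hinj t s ht hs h2.symm
                  subst e
                  exact ha2 h1
                · rintro ⟨t, ht, hte, h1, h2⟩
                  have e : (t+1) % k = s := hinj _ _ (mod_succ_lt t hk0) hs h2.symm
                  have e2 : t = pr k s := (succ_eq_iff_pr hk0 ht hs).1 e
                  subst e2
                  exact ha1 h1
        · apply card_filter_congr
          intro a
          beta_reduce
          rw [if_neg (fun h => hs0 (hinj s 0 hs hk0 h.2)), if_neg, if_neg]
          · rintro ⟨t, ht, hto, h1, h2⟩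
            have e : t = s := hinj t s ht hs h2.symm
            subst e
            exact hso hto
          · rintro ⟨t, ht, hte, h1, h2⟩
            have e : (t+1) % k = s := hinj _ _ (mod_succ_lt t hk0) hs h2.symm
            have e2 : t = pr k s := (succ_eq_iff_pr hk0 ht hs).1 e
            subst e2
            rw [hpr s hs] at hte
            simp [hs0] at hte
            omega
    · apply card_filter_congr
      intro a
      beta_reduce
      rw [if_neg (fun h => hbc ⟨0, hk0, h.2⟩), if_neg, if_neg]
      · rintro ⟨t, ht, hto, h1, h2⟩; exact hbc ⟨t, ht, h2⟩
      · rintro ⟨t, ht, hte, h1, h2⟩; exact hbc ⟨(t+1) % k, mod_succ_lt t hk0, h2⟩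
  · -- asym
    refine (Finset.ssubset_iff_of_subset ?_).2
      ⟨(w 1, w ((1+1) % k)), ?_, ?_⟩
    · rintro ⟨a, b⟩ hp
      simp only [asymF, mem_filter, mem_univ, true_and] at hp ⊢
      obtain ⟨hp1, hp2⟩ := hp
      beta_reduce at hp1 hp2
      by_cases hL : a = w 0 ∧ b = w 0
      · obtain ⟨rfl, h2'⟩ := hL
        rw [h2'] at hp1 hp2 ⊢
        rw [hp1] at hp2
        exact Bool.noConfusion hp2
      rw [if_neg hL] at hp1
      by_cases hC1 : ∃ t, t < k ∧ t % 2 = 0 ∧ a = w t ∧ b = w ((t+1) % k)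
      · rw [if_pos hC1] at hp1; exact Bool.noConfusion hp1
      rw [if_neg hC1] at hp1
      by_cases hC2 : ∃ t, t < k ∧ t % 2 = 1 ∧ a = w ((t+1) % k) ∧ b = w t
      · exfalso
        obtain ⟨t, ht, hto, rfl, rfl⟩ := hC2
        rw [if_neg ?_, if_neg ?_, if_neg ?_] at hp2
        · rw [(harc t ht).1] at hp2; exact Bool.noConfusion hp2
        · rintro ⟨u, hu, huo, h1, h2⟩
          have e1 : (t+1) % k = u := hinj _ _ (mod_succ_lt t hk0) hu h2
          have e2 : (u+1) % k = t := hinj _ _ (mod_succ_lt u hk0) ht h1.symm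
          rw [← e1] at e2
          exact mod_two_succ_ne_self hk3 ht e2
        · rintro ⟨u, hu, hue, h1, h2⟩
          have e : t = u := hinj t u ht hu h1
          omega
        · rintro ⟨h1, h2⟩
          have e : t = 0 := hinj t 0 ht hk0 h1
          omega
      rw [if_neg hC2] at hp1
      refine ⟨hp1, ?_⟩
      by_cases hL' : b = w 0 ∧ a = w 0
      · exact absurd ⟨hL'.2, hL'.1⟩ hL
      rw [if_neg hL'] at hp2
      by_cases hC1' : ∃ t, t < k ∧ t % 2 = 0 ∧ b = w t ∧ a = w ((t+1) % k)
      · exfalso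
        obtain ⟨t, ht, hte, rfl, rfl⟩ := hC1'
        rw [(harc t ht).2] at hp1
        exact Bool.noConfusion hp1
      rw [if_neg hC1'] at hp2
      by_cases hC2' : ∃ t, t < k ∧ t % 2 = 1 ∧ b = w ((t+1) % k) ∧ a = w t
      · rw [if_pos hC2'] at hp2; exact Bool.noConfusion hp2
      · rw [if_neg hC2'] at hp2; exact hp2
    · simp only [asymF, mem_filter, mem_univ, true_and]
      exact harc 1 (by omega)
    · simp only [asymF, mem_filter, mem_univ, true_and]
      have h20 : (1+1) % k ≠ 0 := by
        rw [succ_eq hk0 (by omega)]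
        split <;> omega
      have hval : (if w ((1+1) % k) = w 0 ∧ w 1 = w 0 then true
          else if ∃ t, t < k ∧ t % 2 = 0 ∧ w ((1+1) % k) = w t ∧ w 1 = w ((t+1) % k) then false
          else if ∃ t, t < k ∧ t % 2 = 1 ∧ w ((1+1) % k) = w ((t+1) % k) ∧ w 1 = w t then true
          else R (w ((1+1) % k)) (w 1)) = true := by
        rw [if_neg, if_neg, if_pos ⟨1, by omega, rfl, rfl, rfl⟩]
        · rintro ⟨u, hu, hue, h1, h2⟩
          have e1 : (1+1) % k = u := hinj _ _ (mod_succ_lt 1 hk0) hu h1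
          have e2 : (u+1) % k = 1 := hinj _ _ (mod_succ_lt u hk0) (by omega) h2.symm
          rw [← e1] at e2
          exact mod_two_succ_ne_self hk3 (by omega) e2
        · rintro ⟨h1, h2⟩
          exact absurd (hinj 1 0 (by omega) hk0 h2) (by omega)
      rintro ⟨-, h2⟩
      rw [hval] at h2
      exact Bool.noConfusion h2

lemma rot_inj {k r : ℕ} {w : ℕ → Fin n} (hk0 : 0 < k)
    (hinj : ∀ s t, s < k → t < k → w s = w t → s = t) :
    ∀ s t, s < k → t < k → w ((s + r) % k) = w ((t + r) % k) → s = t := by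
  intro s t hs ht h
  have h2 : (s + r) % k = (t + r) % k :=
    hinj _ _ (Nat.mod_lt _ hk0) (Nat.mod_lt _ hk0) h
  have h3 : s % k = t % k := Nat.ModEq.add_right_cancel' r h2
  rwa [Nat.mod_eq_of_lt hs, Nat.mod_eq_of_lt ht] at h3

lemma rot_arc {k r : ℕ} {w : ℕ → Fin n} (R : Fin n → Fin n → Bool) (hk0 : 0 < k)
    (harc : ∀ t, t < k → R (w t) (w ((t+1) % k)) = true ∧ R (w ((t+1) % k)) (w t) = false) :
    ∀ t, t < k → R (w ((t + r) % k)) (w (((t+1) % k + r) % k)) = true ∧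
      R (w (((t+1) % k + r) % k)) (w ((t + r) % k)) = false := by
  intro t ht
  have e : ((t+1) % k + r) % k = ((t + r) % k + 1) % k := by
    rw [Nat.mod_add_mod, Nat.mod_add_mod]
    congr 1
    omega
  rw [e]
  exact harc ((t + r) % k) (Nat.mod_lt _ hk0)

lemma symm_of_no_asym (R : Fin n → Fin n → Bool)
    (h : ¬ ∃ p : Fin n × Fin n, R p.1 p.2 = true ∧ R p.2 p.1 = false) :
    ∀ a b, R a b = R b a := by
  have key : ∀ a b, R a b = true → R b a = true := by
    intro a b hab
    cases hba : R b a
    · exact absurd ⟨(a, b), hab, hba⟩ h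
    · rfl
  intro a b
  cases hab : R a b <;> cases hba : R b a
  · rfl
  · exact absurd (key b a hba) (by simp [hab])
  · exact absurd (key a b hab) (by simp [hba])
  · rfl

lemma exists_symm (R : Fin n → Fin n → Bool) (hbal : ∀ v, degA R v = degB R v) :
    ∃ S : Fin n → Fin n → Bool, (∀ a b, S a b = S b a) ∧ (∀ a, degA S a = degA R a) := by
  suffices h : ∀ (N : ℕ) (R : Fin n → Fin n → Bool), (asymF R).card ≤ N →
      (∀ v, degA R v = degB R v) →
      ∃ S : Fin n → Fin n → Bool, (∀ a b, S a b = S b a) ∧ (∀ a, degA S a = degA R a) from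
    h (asymF R).card R le_rfl hbal
  intro N
  induction N with
  | zero =>
    intro R hc hbal
    refine ⟨R, symm_of_no_asym R ?_, fun a => rfl⟩
    rintro ⟨p, h1, h2⟩
    have hmem : p ∈ asymF R := by simp [asymF, h1, h2]
    have : 0 < (asymF R).card := card_pos.2 ⟨p, hmem⟩
    omega
  | succ N ih =>
    intro R hc hbal
    by_cases hex : ∃ p : Fin n × Fin n, R p.1 p.2 = true ∧ R p.2 p.1 = false
    · obtain ⟨⟨i, j⟩, hij1, hij2⟩ := hex
      have hbal' : ∀ v, outD R v = inD R v := fun v => rowcol_split R v (hbal v)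
      obtain ⟨k, w, hk3, hinj, harc⟩ := exists_cycle R hbal' hij1 hij2
      have hk0 : 0 < k := by omega
      have step : ∃ R' : Fin n → Fin n → Bool,
          (∀ a, degA R' a = degA R a) ∧ (∀ b, degB R' b = degB R b) ∧
          asymF R' ⊂ asymF R := by
        by_cases hke : k % 2 = 0
        · exact surgeryP1 R k w hk3 hke hinj harc
        · have hko : k % 2 = 1 := by omega
          by_cases hloop : ∀ t, t < k → R (w t) (w t) = true
          · exact surgeryP3 R k w hk3 hinj harc hloop
          · push_neg at hloop
            obtain ⟨r, hr, hrl⟩ := hloop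
            have hrl' : R (w r) (w r) = false := by
              cases hv : R (w r) (w r)
              · rfl
              · exact absurd hv hrl
            refine surgeryP2 R k (fun u => w ((u + r) % k)) hk3 hko
              (rot_inj hk0 hinj) (rot_arc R hk0 harc) ?_
            have e : (0 + r) % k = r := by rw [Nat.zero_add, Nat.mod_eq_of_lt hr]
            beta_reduce
            rw [e]
            exact hrl'
      obtain ⟨R', hrow, hcol, hsub⟩ := step
      have hbal'' : ∀ v, degA R' v = degB R' v := fun v => by
        rw [hrow v, hcol v]; exact hbal v
      have hcard : (asymF R').card < (asymF R).card := card_lt_card hsub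
      obtain ⟨S, hsym, hdeg⟩ := ih R' (by omega) hbal''
      exact ⟨S, hsym, fun a => (hdeg a).trans (hrow a)⟩
    · exact ⟨R, symm_of_no_asym R hex, fun a => rfl⟩

lemma exists_perm_comp (f g : Fin n → ℕ)
    (h : Multiset.map f Finset.univ.val = Multiset.map g Finset.univ.val) :
    ∃ σ : Equiv.Perm (Fin n), ∀ i, g (σ i) = f i := by
  have hof : ∀ (u : Fin n → ℕ) (σ : Equiv.Perm (Fin n)),
      Multiset.map (u ∘ σ) Finset.univ.val = Multiset.map u Finset.univ.val := by
    intro u σ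
    rw [← Multiset.map_map]
    congr 1
    have h1 : Finset.univ.map σ.toEmbedding = Finset.univ := Finset.map_univ_equiv σ
    calc Multiset.map (⇑σ) Finset.univ.val = (Finset.univ.map σ.toEmbedding).val := rfl
      _ = Finset.univ.val := by rw [h1]
  have hperm : (List.ofFn (f ∘ Tuple.sort f)).Perm (List.ofFn (g ∘ Tuple.sort g)) := by
    rw [← Multiset.coe_eq_coe, ← Fin.univ_val_map, ← Fin.univ_val_map, hof, hof, h]
  have hfg : f ∘ Tuple.sort f = g ∘ Tuple.sort g := List.ofFn_injective
    (List.Perm.eq_of_sortedLE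
      (Tuple.monotone_sort f).sortedLE_ofFn (Tuple.monotone_sort g).sortedLE_ofFn hperm)
  refine ⟨(Tuple.sort f).symm.trans (Tuple.sort g), fun i => ?_⟩
  have := congrFun hfg ((Tuple.sort f).symm i)
  simpa using this.symm

end MB

/-- A sequence is mirror bigraphic iff the pair `(P, P)` is bigraphic. -/
theorem stmt_3 (P : Multiset ℕ) : IsMirrorBigraphic P ↔ IsBigraphic P P := by
  constructor
  · rintro ⟨n, R, _, hA, hB⟩
    exact ⟨n, n, R, hA, hB⟩
  · rintro ⟨n, m, R, hA, hB⟩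
    have hcn : Multiset.card P = n := by
      rw [← hA]; simp [degSeqA]
    have hcm : Multiset.card P = m := by
      rw [← hB]; simp [degSeqB]
    have hnm : n = m := by omega
    subst hnm
    obtain ⟨σ, hσ⟩ := exists_perm_comp (degA R) (degB R) (by
      rw [show Multiset.map (degA R) Finset.univ.val = degSeqA R from rfl,
          show Multiset.map (degB R) Finset.univ.val = degSeqB R from rfl, hA, hB])
    set R₁ : Fin n → Fin n → Bool := fun a b => R a (σ b) with hR₁
    have hdegA1 : ∀ a, degA R₁ a = degA R a := by
      intro a
      unfold degA
      apply Finset.card_bij' (fun b _ => σ b) (fun b _ => σ.symm b)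
      · intro b hb
        simp only [mem_filter, mem_univ, true_and, hR₁] at hb ⊢
        exact hb
      · intro b hb
        simp only [mem_filter, mem_univ, true_and, hR₁] at hb ⊢
        simpa using hb
      · intro b _; simp
      · intro b _; simp
    have hdegB1 : ∀ b, degB R₁ b = degB R (σ b) := fun b => rfl
    have hbal : ∀ v, degA R₁ v = degB R₁ v := fun v => by
      rw [hdegA1 v, hdegB1 v, hσ v]
    obtain ⟨S, hsym, hdeg⟩ := exists_symm R₁ hbal
    have hSA : degSeqA S = P := by
      rw [← hA]
      apply Multiset.map_congr rfl
      intro x _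
      rw [hdeg x, hdegA1 x]
    have hdegBS : ∀ b, degB S b = degA S b := by
      intro b
      unfold degA degB
      congr 1
      apply Finset.filter_congr
      intro a _
      rw [hsym a b]
    have hSB : degSeqB S = P := by
      rw [← hSA]
      apply Multiset.map_congr rfl
      intro x _
      exact hdegBS x
    exact ⟨n, S, ⟨Equiv.refl _, fun u v => by simpa using hsym u v⟩, hSA, hSB⟩
end

section
/- A sequence P of nonnegative integers is loop graphic (realizable as the degree sequence of an l-graph, where each loop contributes 1 to the degree of its vertex) if and only if the pair (P,P) is bigraphic. -/
open Finset

section Helpers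

variable {n : ℕ}

lemma card_filter_eq_sum (p : Fin n → Bool) :
    (univ.filter fun b => p b = true).card = ∑ b : Fin n, (if p b = true then 1 else 0) :=
  Finset.card_filter _ _

lemma sum_two_swap (f g : Fin n → ℕ) (x y : Fin n) (hxy : x ≠ y)
    (h : ∀ b, b ≠ x → b ≠ y → f b = g b) (hsum : f x + f y = g x + g y) :
    ∑ b, f b = ∑ b, g b := by
  classical
  have hy : y ∈ (univ : Finset (Fin n)) \ {x} := by
    simp [Ne.symm, hxy]
  rw [Finset.sum_eq_sum_sdiff_singleton_add (mem_univ x) f,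
      Finset.sum_eq_sum_sdiff_singleton_add (mem_univ x) g,
      Finset.sum_eq_sum_sdiff_singleton_add hy f,
      Finset.sum_eq_sum_sdiff_singleton_add hy g]
  have : ∑ b ∈ (univ \ {x}) \ {y}, f b = ∑ b ∈ (univ \ {x}) \ {y}, g b := by
    apply Finset.sum_congr rfl
    intro b hb
    simp only [Finset.mem_sdiff, Finset.mem_singleton] at hb
    exact h b hb.1.2 hb.2
  omega

lemma card_val_lt {k : ℕ} (hk : k ≤ n) :
    (univ.filter fun j : Fin n => j.val < k).card = k := by
  have : (univ.filter fun j : Fin n => j.val < k) = Finset.map (Fin.castLEEmb hk) univ := by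
    ext j
    simp only [mem_filter, mem_univ, true_and, Finset.mem_map]
    constructor
    · intro hj
      exact ⟨⟨j.val, hj⟩, rfl⟩
    · rintro ⟨a, -, rfl⟩
      exact a.isLt
  rw [this, Finset.card_map, Finset.card_univ, Fintype.card_fin]

lemma card_filter_equiv {m : ℕ} (e : Fin n ≃ Fin m) (q : Fin m → Bool) :
    (univ.filter fun b : Fin n => q (e b) = true).card
      = (univ.filter fun b => q b = true).card := by
  have : (univ.filter fun b : Fin n => q (e b) = true)
      = Finset.map e.symm.toEmbedding (univ.filter fun b => q b = true) := by
    ext b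
    simp only [mem_filter, mem_univ, true_and, Finset.mem_map, Equiv.coe_toEmbedding]
    constructor
    · intro hb; exact ⟨e b, hb, e.symm_apply_apply b⟩
    · rintro ⟨c, hc, rfl⟩; simpa using hc
  rw [this, Finset.card_map]

/-- The 2×2 swap operation on a Boolean matrix. -/
def swapM (A : Fin n → Fin n → Bool) (i i' j j' : Fin n) : Fin n → Fin n → Bool :=
  fun a b =>
    if a = i then (if b = j then false else if b = j' then true else A a b)
    else if a = i' then (if b = j then true else if b = j' then false else A a b)
    else A a b

variable {A : Fin n → Fin n → Bool} {i i' j j' : Fin n}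

lemma swapM_other {a b : Fin n} (ha1 : a ≠ i) (ha2 : a ≠ i') :
    swapM A i i' j j' a b = A a b := by
  simp [swapM, ha1, ha2]

lemma swapM_degA (hii : i ≠ i') (hjj : j ≠ j') (h1 : A i j = true) (h2 : A i j' = false)
    (h3 : A i' j = false) (h4 : A i' j' = true) (a : Fin n) :
    degA (swapM A i i' j j') a = degA A a := by
  rcases eq_or_ne a i with rfl | hai
  · rw [degA, degA, card_filter_eq_sum, card_filter_eq_sum]
    apply sum_two_swap _ _ j j' hjj
    · intro b hb1 hb2; simp [swapM, hb1, hb2]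
    · simp [swapM, hjj, Ne.symm hjj, h1, h2]
  rcases eq_or_ne a i' with rfl | hai'
  · rw [degA, degA, card_filter_eq_sum, card_filter_eq_sum]
    apply sum_two_swap _ _ j j' hjj
    · intro b hb1 hb2; simp [swapM, hb1, hb2, Ne.symm hii]
    · simp [swapM, hjj, Ne.symm hjj, Ne.symm hii, h3, h4]
  · unfold degA
    congr 1
    apply Finset.filter_congr
    intro b _
    rw [swapM_other hai hai']

lemma swapM_degB (hii : i ≠ i') (hjj : j ≠ j') (h1 : A i j = true) (h2 : A i j' = false)
    (h3 : A i' j = false) (h4 : A i' j' = true) (b : Fin n) :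
    degB (swapM A i i' j j') b = degB A b := by
  rcases eq_or_ne b j with rfl | hbj
  · rw [degB, degB, card_filter_eq_sum, card_filter_eq_sum]
    apply sum_two_swap _ _ i i' hii
    · intro a ha1 ha2; simp [swapM, ha1, ha2]
    · simp [swapM, hii, Ne.symm hii, h1, h3]
  rcases eq_or_ne b j' with rfl | hbj'
  · rw [degB, degB, card_filter_eq_sum, card_filter_eq_sum]
    apply sum_two_swap _ _ i i' hii
    · intro a ha1 ha2; simp [swapM, ha1, ha2]
    · simp [swapM, hii, Ne.symm hii, hjj, Ne.symm hjj, h2, h4]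
  · unfold degB
    congr 1
    apply Finset.filter_congr
    intro a _
    rcases eq_or_ne a i with rfl | hai
    · simp [swapM, hbj, hbj']
    rcases eq_or_ne a i' with rfl | hai'
    · simp [swapM, hbj, hbj', Ne.symm hii]
    · rw [swapM_other hai hai']

lemma exists_partner_row (A : Fin n → Fin n → Bool) (v x y : Fin n)
    (h1 : A v x = true) (h2 : A v y = false) (hle : degB A x ≤ degB A y) :
    ∃ i, i ≠ v ∧ A i y = true ∧ A i x = false := by
  by_contra hcon
  push_neg at hcon
  have hsub : univ.filter (fun i => A i y = true)
      ⊆ (univ.filter fun i => A i x = true) \ {v} := by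
    intro i hi
    simp only [mem_filter, mem_univ, true_and] at hi
    simp only [Finset.mem_sdiff, mem_filter, mem_univ, true_and, Finset.mem_singleton]
    have hiv : i ≠ v := by rintro rfl; rw [h2] at hi; exact Bool.false_ne_true hi
    refine ⟨?_, hiv⟩
    have := hcon i hiv hi
    simpa using this
  have hv : v ∈ univ.filter (fun i => A i x = true) := by simp [h1]
  have hcard := Finset.card_le_card hsub
  rw [Finset.card_sdiff_of_subset (by simpa using hv)] at hcard
  have hpos : 1 ≤ (univ.filter fun i => A i x = true).card :=
    Finset.card_pos.mpr ⟨v, hv⟩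
  unfold degB at hle
  simp only [Finset.card_singleton] at hcard
  omega

lemma exists_partner_col (A : Fin n → Fin n → Bool) (w x y : Fin n)
    (h1 : A x w = true) (h2 : A y w = false) (hle : degA A x ≤ degA A y) :
    ∃ j, j ≠ w ∧ A y j = true ∧ A x j = false := by
  by_contra hcon
  push_neg at hcon
  have hsub : univ.filter (fun j => A y j = true)
      ⊆ (univ.filter fun j => A x j = true) \ {w} := by
    intro j hj
    simp only [mem_filter, mem_univ, true_and] at hj
    simp only [Finset.mem_sdiff, mem_filter, mem_univ, true_and, Finset.mem_singleton]
    have hjw : j ≠ w := by rintro rfl; rw [h2] at hj; exact Bool.false_ne_true hj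
    refine ⟨?_, hjw⟩
    have := hcon j hjw hj
    simpa using this
  have hw : w ∈ univ.filter (fun j => A x j = true) := by simp [h1]
  have hcard := Finset.card_le_card hsub
  rw [Finset.card_sdiff_of_subset (by simpa using hw)] at hcard
  have hpos : 1 ≤ (univ.filter fun j => A x j = true).card := Finset.card_pos.mpr ⟨w, hw⟩
  unfold degA at hle
  simp only [Finset.card_singleton] at hcard
  omega

lemma exists_both_diffs {s t : Finset (Fin n)} (hcard : s.card = t.card) (hne : s ≠ t) :
    (∃ a ∈ s, a ∉ t) ∧ (∃ b ∈ t, b ∉ s) := by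
  constructor
  · by_contra hcon
    push_neg at hcon
    exact hne (Finset.eq_of_subset_of_card_le hcon (le_of_eq hcard.symm))
  · by_contra hcon
    push_neg at hcon
    exact hne (Finset.eq_of_subset_of_card_le hcon (le_of_eq hcard)).symm

lemma fixrow_step {m : ℕ} (d : Fin (m+1) → ℕ) (hd : Antitone d)
    (A : Fin (m+1) → Fin (m+1) → Bool)
    (hr : ∀ i, degA A i = d i) (hc : ∀ j, degB A j = d j)
    (hnot : ¬ ∀ j, (A 0 j = true ↔ j.val < d 0)) :
    ∃ B, (∀ i, degA B i = d i) ∧ (∀ j, degB B j = d j) ∧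
      (∑ j ∈ univ.filter (fun j => B 0 j = true), j.val)
        < (∑ j ∈ univ.filter (fun j => A 0 j = true), j.val) := by
  classical
  set k := d 0 with hkdef
  have hk : k ≤ m + 1 := by
    have h0 := hr 0
    unfold degA at h0
    rw [hkdef, ← h0]
    simpa using Finset.card_filter_le (univ : Finset (Fin (m+1))) _
  set supp := univ.filter (fun j => A 0 j = true) with hsupp
  set target := univ.filter (fun j : Fin (m+1) => j.val < k) with htarget
  have hcards : supp.card = target.card := by
    rw [card_val_lt hk]
    have h0 := hr 0
    unfold degA at h0
    exact h0
  have hne : supp ≠ target := by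
    intro heq
    apply hnot
    intro j
    have : j ∈ supp ↔ j ∈ target := by rw [heq]
    simpa [hsupp, htarget] using this
  obtain ⟨⟨x, hxs, hxt⟩, ⟨y, hyt, hys⟩⟩ := exists_both_diffs hcards hne
  simp only [hsupp, htarget, mem_filter, mem_univ, true_and, not_lt] at hxs hxt hyt hys
  have hAy : A 0 y = false := by
    cases h : A 0 y
    · rfl
    · exact absurd h hys
  have hyx : y.val < x.val := lt_of_lt_of_le hyt hxt
  have hxyne : x ≠ y := by
    intro h; rw [h] at hyx; omega
  have hdeg : degB A x ≤ degB A y := by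
    rw [hc, hc]
    exact hd (by exact le_of_lt (show y < x from hyx))
  obtain ⟨i, hi0, hiy, hix⟩ := exists_partner_row A 0 x y hxs hAy hdeg
  have hii : (0 : Fin (m+1)) ≠ i := Ne.symm hi0
  refine ⟨swapM A 0 i x y, ?_, ?_, ?_⟩
  · intro a; rw [swapM_degA hii hxyne hxs hAy hix hiy a, hr]
  · intro b; rw [swapM_degB hii hxyne hxs hAy hix hiy b, hc]
  · have hset : univ.filter (fun j => swapM A 0 i x y 0 j = true)
        = insert y (supp.erase x) := by
      ext b
      rcases eq_or_ne b x with rfl | hbx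
      · simp [swapM, hxyne, Finset.mem_insert, Ne.symm hxyne]
      rcases eq_or_ne b y with rfl | hby
      · simp [swapM, Ne.symm hxyne]
      · simp [swapM, hbx, hby, hsupp, Finset.mem_insert, hby,
          Finset.mem_erase, hbx]
    rw [hset]
    have hynotin : y ∉ supp.erase x := by
      intro h
      have hmem := Finset.mem_of_mem_erase h
      simp only [hsupp, mem_filter, mem_univ, true_and] at hmem
      exact hys hmem
    rw [Finset.sum_insert hynotin]
    have hxmem : x ∈ supp := by simp [hsupp, hxs]
    have herase : (∑ j ∈ supp.erase x, j.val) + x.val = ∑ j ∈ supp, j.val :=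
      Finset.sum_erase_add supp _ hxmem
    omega

lemma fixrow {m : ℕ} (d : Fin (m+1) → ℕ) (hd : Antitone d) :
    ∀ (N : ℕ) (A : Fin (m+1) → Fin (m+1) → Bool),
      (∀ i, degA A i = d i) → (∀ j, degB A j = d j) →
      (∑ j ∈ univ.filter (fun j => A 0 j = true), j.val) ≤ N →
      ∃ B, (∀ i, degA B i = d i) ∧ (∀ j, degB B j = d j) ∧
        (∀ j, (B 0 j = true ↔ j.val < d 0)) := by
  intro N
  induction N with
  | zero =>
    intro A hr hc hm
    by_cases hdone : ∀ j, (A 0 j = true ↔ j.val < d 0)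
    · exact ⟨A, hr, hc, hdone⟩
    · obtain ⟨B, _, _, hlt⟩ := fixrow_step d hd A hr hc hdone
      omega
  | succ N ih =>
    intro A hr hc hm
    by_cases hdone : ∀ j, (A 0 j = true ↔ j.val < d 0)
    · exact ⟨A, hr, hc, hdone⟩
    · obtain ⟨B, hBr, hBc, hlt⟩ := fixrow_step d hd A hr hc hdone
      exact ih B hBr hBc (by omega)

lemma fixcol_step {m : ℕ} (d : Fin (m+1) → ℕ) (hd : Antitone d) (hk1 : 1 ≤ d 0)
    (A : Fin (m+1) → Fin (m+1) → Bool)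
    (hr : ∀ i, degA A i = d i) (hc : ∀ j, degB A j = d j)
    (hrow : ∀ j, (A 0 j = true ↔ j.val < d 0))
    (hnot : ¬ ∀ i, (A i 0 = true ↔ i.val < d 0)) :
    ∃ B, (∀ i, degA B i = d i) ∧ (∀ j, degB B j = d j) ∧
      (∀ j, (B 0 j = true ↔ j.val < d 0)) ∧
      (∑ i ∈ univ.filter (fun i => B i 0 = true), i.val)
        < (∑ i ∈ univ.filter (fun i => A i 0 = true), i.val) := by
  classical
  set k := d 0 with hkdef
  have hk : k ≤ m + 1 := by
    have h0 := hc 0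
    unfold degB at h0
    rw [hkdef, ← h0]
    simpa using Finset.card_filter_le (univ : Finset (Fin (m+1))) _
  set supp := univ.filter (fun i => A i 0 = true) with hsupp
  set target := univ.filter (fun i : Fin (m+1) => i.val < k) with htarget
  have hcards : supp.card = target.card := by
    rw [card_val_lt hk]
    have h0 := hc 0
    unfold degB at h0
    exact h0
  have hne : supp ≠ target := by
    intro heq
    apply hnot
    intro i
    have : i ∈ supp ↔ i ∈ target := by rw [heq]
    simpa [hsupp, htarget] using this
  obtain ⟨⟨x, hxs, hxt⟩, ⟨y, hyt, hys⟩⟩ := exists_both_diffs hcards hne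
  simp only [hsupp, htarget, mem_filter, mem_univ, true_and, not_lt] at hxs hxt hyt hys
  have hAy : A y 0 = false := by
    cases h : A y 0
    · rfl
    · exact absurd h hys
  have hyx : y.val < x.val := lt_of_lt_of_le hyt hxt
  have hxyne : x ≠ y := by intro h; rw [h] at hyx; omega
  have hx0 : x ≠ 0 := by
    intro h
    rw [h] at hxt
    simp at hxt
    omega
  have hy0 : y ≠ 0 := by
    intro h
    rw [h] at hAy
    have := (hrow 0).mpr (by simpa using (show 0 < k by omega))
    rw [this] at hAy
    simp at hAy
  have hdeg : degA A x ≤ degA A y := by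
    rw [hr, hr]
    exact hd (le_of_lt (show y < x from hyx))
  obtain ⟨j, hj0, hyj, hxj⟩ := exists_partner_col A 0 x y hxs hAy hdeg
  have hjj : (0 : Fin (m+1)) ≠ j := Ne.symm hj0
  refine ⟨swapM A x y 0 j, ?_, ?_, ?_, ?_⟩
  · intro a; rw [swapM_degA hxyne hjj hxs hxj hAy hyj a, hr]
  · intro b; rw [swapM_degB hxyne hjj hxs hxj hAy hyj b, hc]
  · intro b
    rw [swapM_other (Ne.symm hx0) (Ne.symm hy0)]
    exact hrow b
  · have hset : univ.filter (fun i => swapM A x y 0 j i 0 = true)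
        = insert y (supp.erase x) := by
      ext a
      rcases eq_or_ne a x with rfl | hax
      · simp [swapM, hxyne, Ne.symm hxyne]
      rcases eq_or_ne a y with rfl | hay
      · simp [swapM, Ne.symm hxyne, hj0, Ne.symm hj0]
      · simp [swapM, hax, hay, hsupp, Finset.mem_insert, hay, Finset.mem_erase, hax]
    rw [hset]
    have hynotin : y ∉ supp.erase x := by
      intro h
      have hmem := Finset.mem_of_mem_erase h
      simp only [hsupp, mem_filter, mem_univ, true_and] at hmem
      exact hys hmem
    rw [Finset.sum_insert hynotin]
    have hxmem : x ∈ supp := by simp [hsupp, hxs]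
    have herase : (∑ i ∈ supp.erase x, i.val) + x.val = ∑ i ∈ supp, i.val :=
      Finset.sum_erase_add supp _ hxmem
    omega

lemma fixcol {m : ℕ} (d : Fin (m+1) → ℕ) (hd : Antitone d) (hk1 : 1 ≤ d 0) :
    ∀ (N : ℕ) (A : Fin (m+1) → Fin (m+1) → Bool),
      (∀ i, degA A i = d i) → (∀ j, degB A j = d j) →
      (∀ j, (A 0 j = true ↔ j.val < d 0)) →
      (∑ i ∈ univ.filter (fun i => A i 0 = true), i.val) ≤ N →
      ∃ B, (∀ i, degA B i = d i) ∧ (∀ j, degB B j = d j) ∧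
        (∀ j, (B 0 j = true ↔ j.val < d 0)) ∧
        (∀ i, (B i 0 = true ↔ i.val < d 0)) := by
  intro N
  induction N with
  | zero =>
    intro A hr hc hrow hm
    by_cases hdone : ∀ i, (A i 0 = true ↔ i.val < d 0)
    · exact ⟨A, hr, hc, hrow, hdone⟩
    · obtain ⟨B, _, _, _, hlt⟩ := fixcol_step d hd hk1 A hr hc hrow hdone
      omega
  | succ N ih =>
    intro A hr hc hrow hm
    by_cases hdone : ∀ i, (A i 0 = true ↔ i.val < d 0)
    · exact ⟨A, hr, hc, hrow, hdone⟩
    · obtain ⟨B, hBr, hBc, hBrow, hlt⟩ := fixcol_step d hd hk1 A hr hc hrow hdone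
      exact ih B hBr hBc hBrow (by omega)

lemma card_filter_succ {m : ℕ} (p : Fin (m+1) → Bool) :
    (univ.filter fun b => p b = true).card
      = (if p 0 = true then 1 else 0) + (univ.filter fun b : Fin m => p b.succ = true).card := by
  rw [card_filter_eq_sum, card_filter_eq_sum, Fin.sum_univ_succ]

lemma key : ∀ (n : ℕ) (d : Fin n → ℕ) (A : Fin n → Fin n → Bool),
    (∀ i, degA A i = d i) → (∀ j, degB A j = d j) →
    ∃ L : Fin n → Fin n → Bool, (∀ a b, L a b = L b a) ∧ ∀ a, degA L a = d a := by
  intro n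
  induction n with
  | zero =>
    intro d A _ _
    exact ⟨fun _ _ => false, fun a => a.elim0, fun a => a.elim0⟩
  | succ m ih =>
    intro d A hr hc
    classical
    set σ : Equiv.Perm (Fin (m+1)) := (Fin.revPerm).trans (Tuple.sort d) with hσ
    set dS : Fin (m+1) → ℕ := fun i => d (σ i) with hdS
    have hAnti : Antitone dS := by
      intro a b hab
      exact (Tuple.monotone_sort d) (Fin.rev_le_rev.mpr hab)
    set A2 : Fin (m+1) → Fin (m+1) → Bool := fun i j => A (σ i) (σ j) with hA2
    have hr2 : ∀ i, degA A2 i = dS i := by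
      intro i
      have : degA A2 i = degA A (σ i) := card_filter_equiv σ (A (σ i))
      rw [this, hr]
    have hc2 : ∀ j, degB A2 j = dS j := by
      intro j
      have : degB A2 j = degB A (σ j) := card_filter_equiv σ (fun i => A i (σ j))
      rw [this, hc]
    suffices hS : ∃ L : Fin (m+1) → Fin (m+1) → Bool,
        (∀ a b, L a b = L b a) ∧ ∀ a, degA L a = dS a by
      obtain ⟨L, hsym, hdeg⟩ := hS
      refine ⟨fun a b => L (σ.symm a) (σ.symm b), fun a b => hsym _ _, fun a => ?_⟩
      have h1 : degA (fun a b => L (σ.symm a) (σ.symm b)) a = degA L (σ.symm a) :=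
        card_filter_equiv σ.symm (L (σ.symm a))
      rw [h1, hdeg]
      simp [hdS]
    by_cases hk0 : dS 0 = 0
    · refine ⟨fun _ _ => false, fun _ _ => rfl, fun a => ?_⟩
      have : dS a = 0 := Nat.le_zero.mp (hk0 ▸ hAnti (Fin.zero_le a))
      rw [this]
      simp [degA]
    · set k := dS 0 with hkdef
      have hk1 : 1 ≤ k := Nat.one_le_iff_ne_zero.mpr hk0
      have hk : k ≤ m + 1 := by
        have h0 := hr2 0
        unfold degA at h0
        rw [hkdef, ← h0]
        simpa using Finset.card_filter_le (univ : Finset (Fin (m+1))) _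
      obtain ⟨A3, hr3, hc3, hrow3⟩ := fixrow dS hAnti _ A2 hr2 hc2 le_rfl
      obtain ⟨A4, hr4, hc4, hrow4, hcol4⟩ := fixcol dS hAnti hk1 _ A3 hr3 hc3 hrow3 le_rfl
      set A' : Fin m → Fin m → Bool := fun i j => A4 i.succ j.succ with hA'
      have hiteR : ∀ i : Fin m, (if A4 i.succ 0 = true then 1 else 0)
          = (if (i.succ : Fin (m+1)).val < k then 1 else 0) := by
        intro i
        by_cases h : (i.succ : Fin (m+1)).val < k
        · rw [if_pos ((hcol4 i.succ).mpr h), if_pos h]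
        · rw [if_neg (fun hh => h ((hcol4 i.succ).mp hh)), if_neg h]
      have hiteC : ∀ j : Fin m, (if A4 0 j.succ = true then 1 else 0)
          = (if (j.succ : Fin (m+1)).val < k then 1 else 0) := by
        intro j
        by_cases h : (j.succ : Fin (m+1)).val < k
        · rw [if_pos ((hrow4 j.succ).mpr h), if_pos h]
        · rw [if_neg (fun hh => h ((hrow4 j.succ).mp hh)), if_neg h]
      have hrowEq : ∀ i : Fin m,
          dS i.succ = (if (i.succ : Fin (m+1)).val < k then 1 else 0) + degA A' i := by
        intro i
        rw [← hr4 i.succ]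
        rw [show degA A4 i.succ = (univ.filter fun b => A4 i.succ b = true).card from rfl,
          card_filter_succ (fun b => A4 i.succ b), hiteR i]
        rfl
      have hcolEq : ∀ j : Fin m,
          dS j.succ = (if (j.succ : Fin (m+1)).val < k then 1 else 0) + degB A' j := by
        intro j
        rw [← hc4 j.succ]
        rw [show degB A4 j.succ = (univ.filter fun a => A4 a j.succ = true).card from rfl,
          card_filter_succ (fun a => A4 a j.succ), hiteC j]
        rfl
      obtain ⟨L', hsym', hdeg'⟩ := ih (fun i => degA A' i) A' (fun _ => rfl)
        (fun j => by have h1 := hrowEq j; have h2 := hcolEq j; show degB A' j = degA A' j; omega)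
      set L : Fin (m+1) → Fin (m+1) → Bool := fun a =>
        Fin.cases (fun b => decide (b.val < k))
          (fun i => fun b => Fin.cases (decide ((Fin.succ i : Fin (m+1)).val < k))
            (fun j => L' i j) b) a with hL
      have hL0 : ∀ b, L 0 b = decide (b.val < k) := fun b => by simp [hL]
      have hLs0 : ∀ i : Fin m, L i.succ 0 = decide ((Fin.succ i : Fin (m+1)).val < k) :=
        fun i => by simp [hL]
      have hLss : ∀ (i j : Fin m), L i.succ j.succ = L' i j := fun i j => by simp [hL]
      refine ⟨L, ?_, ?_⟩
      · intro a b
        rcases Fin.eq_zero_or_eq_succ a with rfl | ⟨i, rfl⟩ <;>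
          rcases Fin.eq_zero_or_eq_succ b with rfl | ⟨j, rfl⟩
        · rfl
        · rw [hL0, hLs0]
        · rw [hL0, hLs0]
        · rw [hLss, hLss, hsym']
      · intro a
        rcases Fin.eq_zero_or_eq_succ a with rfl | ⟨i, rfl⟩
        · have : degA L 0 = (univ.filter fun b : Fin (m+1) => b.val < k).card := by
            unfold degA
            congr 1
            apply Finset.filter_congr
            intro b _
            simp [hL0]
          rw [this, card_val_lt hk]
        · have hsplit : degA L i.succ
              = (if L i.succ 0 = true then 1 else 0)
                + (univ.filter fun b : Fin m => L i.succ b.succ = true).card :=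
            card_filter_succ (fun b => L i.succ b)
          have h2 : (univ.filter fun b : Fin m => L i.succ b.succ = true).card
              = degA A' i := by
            rw [show (univ.filter fun b : Fin m => L i.succ b.succ = true)
                = (univ.filter fun b : Fin m => L' i b = true) from
              Finset.filter_congr (fun b _ => by rw [hLss])]
            exact hdeg' i
          rw [hsplit, h2, hLs0]
          rw [hrowEq i]
          by_cases h : (Fin.succ i : Fin (m+1)).val < k
          · simp [h]
          · simp [h]

lemma antitone_unique {n : ℕ} {f g : Fin n → ℕ} (hf : Antitone f) (hg : Antitone g)
    (h : Multiset.map f Finset.univ.val = Multiset.map g Finset.univ.val) : f = g := by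
  have hperm : List.Perm (List.ofFn f) (List.ofFn g) := by
    rw [Fin.univ_val_map f, Fin.univ_val_map g] at h
    exact Quotient.exact h
  haveI : IsAntisymm ℕ (· ≥ ·) := ⟨fun _ _ h1 h2 => le_antisymm h2 h1⟩
  apply List.ofFn_injective
  refine List.Perm.eq_of_pairwise' (r := (· ≥ ·)) ?_ ?_ hperm
  · exact List.pairwise_ofFn.mpr (fun i j hij => hf (le_of_lt hij))
  · exact List.pairwise_ofFn.mpr (fun i j hij => hg (le_of_lt hij))

lemma map_univ_perm {n : ℕ} (f : Fin n → ℕ) (σ : Equiv.Perm (Fin n)) :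
    Multiset.map (fun i => f (σ i)) Finset.univ.val = Multiset.map f Finset.univ.val := by
  have : Multiset.map (⇑σ) Finset.univ.val = Finset.univ.val := by
    have h := congrArg Finset.val (Finset.map_univ_equiv σ)
    rwa [Finset.map_val, Equiv.coe_toEmbedding] at h
  rw [show (fun i => f (σ i)) = f ∘ ⇑σ from rfl, ← Multiset.map_map, this]

end Helpers

/-- A sequence is loop graphic iff the pair `(P, P)` is bigraphic. -/
theorem stmt_4 (P : Multiset ℕ) : IsLoopGraphic P ↔ IsBigraphic P P := by
  constructor
  · rintro ⟨n, L, hsym, hmap⟩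
    refine ⟨n, n, L, hmap, ?_⟩
    have hBA : ∀ b, degB L b = degA L b := by
      intro b
      unfold degA degB
      congr 1
      apply Finset.filter_congr
      intro a _
      rw [hsym]
    unfold degSeqB
    rw [Multiset.map_congr rfl (fun b _ => hBA b)]
    exact hmap
  · rintro ⟨n, m, R, hA, hB⟩
    have hn : P.card = n := by
      rw [← hA]; simp [degSeqA]
    have hm : P.card = m := by
      rw [← hB]; simp [degSeqB]
    have hnm : n = m := by omega
    subst hnm
    classical
    set σ : Equiv.Perm (Fin n) := (Fin.revPerm).trans (Tuple.sort (degA R)) with hσ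
    set τ : Equiv.Perm (Fin n) := (Fin.revPerm).trans (Tuple.sort (degB R)) with hτ
    have hfanti : Antitone (fun i => degA R (σ i)) := by
      intro a b hab
      exact (Tuple.monotone_sort (degA R)) (Fin.rev_le_rev.mpr hab)
    have hganti : Antitone (fun j => degB R (τ j)) := by
      intro a b hab
      exact (Tuple.monotone_sort (degB R)) (Fin.rev_le_rev.mpr hab)
    have heqfg : (fun i => degA R (σ i)) = (fun j => degB R (τ j)) := by
      apply antitone_unique hfanti hganti
      rw [map_univ_perm, map_univ_perm]
      rw [show Multiset.map (degA R) Finset.univ.val = degSeqA R from rfl,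
        show Multiset.map (degB R) Finset.univ.val = degSeqB R from rfl, hA, hB]
    set A2 : Fin n → Fin n → Bool := fun i j => R (σ i) (τ j) with hA2
    have hr2 : ∀ i, degA A2 i = degA R (σ i) := by
      intro i
      exact card_filter_equiv τ (R (σ i))
    have hc2 : ∀ j, degB A2 j = degA R (σ j) := by
      intro j
      have h1 : degB A2 j = degB R (τ j) := card_filter_equiv σ (fun i => R i (τ j))
      rw [h1, ← congrFun heqfg j]
    obtain ⟨L, hsym, hdeg⟩ := key n (fun i => degA R (σ i)) A2 hr2 hc2
    refine ⟨n, L, hsym, ?_⟩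
    have : Multiset.map (fun a => (univ.filter fun b => L a b = true).card)
        Finset.univ.val = Multiset.map (degA L) Finset.univ.val := rfl
    rw [this, Multiset.map_congr rfl (fun a _ => hdeg a), map_univ_perm, 
      show Multiset.map (degA R) Finset.univ.val = degSeqA R from rfl, hA]
end

section
/- For each n ≥ 1, the pair (Pₙ, Pₙ), where Pₙ = (n, n−1, …, 1), is bigraphic, and there is a unique bipartite graph (up to isomorphism) realizing (Pₙ, Pₙ); moreover this graph is a mirror bipartite graph. -/
open Finset

/-- The multiset `{n, n-1, …, 1}`. -/
def Pseq (n : ℕ) : Multiset ℕ := Multiset.map (· + 1) (Multiset.range n)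

lemma card_filter_val_lt (n k : ℕ) :
    (univ.filter fun b : Fin n => b.val < k).card = min k n := by
  have h : (univ.filter fun b : Fin n => b.val < k)
      = univ.filter ((· < k) ∘ Fin.valEmbedding) := rfl
  rw [h, ← Finset.card_map Fin.valEmbedding, ← Finset.filter_map, Fin.map_valEmbedding_univ,
    Finset.Iio_filter_lt, Nat.card_Iio, min_comm]

lemma Pseq_eq (n : ℕ) :
    Multiset.map (fun a : Fin n => n - a.val) Finset.univ.val = Pseq n := by
  induction n with
  | zero => simp [Pseq]
  | succ n ih =>
    have h1 : Pseq (n+1) = (n+1) ::ₘ Pseq n := by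
      simp [Pseq, Multiset.range_succ]
    rw [h1, Fin.univ_succ]
    simp only [Finset.cons_val, Finset.map_val, Multiset.map_cons, Multiset.map_map]
    congr 1
    rw [← ih]
    apply Multiset.map_congr rfl
    intro a _
    show n + 1 - (a.succ).val = n - a.val
    simp only [Fin.val_succ]
    omega

lemma Pseq_nodup (n : ℕ) : (Pseq n).Nodup :=
  (Multiset.nodup_range n).map (fun _ _ h => by omega)

lemma mem_Pseq {n x : ℕ} (h : x ∈ Pseq n) : 1 ≤ x ∧ x ≤ n := by
  rw [Pseq, Multiset.mem_map] at h
  obtain ⟨k, hk, rfl⟩ := h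
  rw [Multiset.mem_range] at hk
  omega

lemma card_reindex {n : ℕ} (g : Fin n ≃ Fin n) (p : Fin n → Prop) [DecidablePred p] :
    (univ.filter fun b => p (g b)).card = (univ.filter p).card := by
  apply Finset.card_bij' (fun b _ => g b) (fun b _ => g.symm b) <;> simp

lemma sorted_key : ∀ (n : ℕ) (R : Fin n → Fin n → Bool),
    (∀ a, degA R a = n - a.val) → (∀ b, degB R b = n - b.val) →
    ∀ a b, R a b = decide (a.val + b.val < n) := by
  intro n
  induction n with
  | zero => intro R _ _ a; exact absurd a.2 (by omega)
  | succ n ih =>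
    intro R hA hB
    -- row 0 is all true
    have hrow0 : ∀ b, R 0 b = true := by
      have h0 : degA R 0 = n + 1 := by simpa using hA 0
      have : (univ.filter fun b => R 0 b = true) = univ := by
        apply Finset.eq_univ_of_card
        simpa [degA] using h0
      intro b
      have := Finset.eq_univ_iff_forall.mp this b
      simpa using this
    -- column last: only row 0
    have hlast : ∀ a : Fin n, R a.succ (Fin.last n) = false := by
      have h1 : degB R (Fin.last n) = 1 := by simpa using hB (Fin.last n)
      have hsum : degB R (Fin.last n)
          = (if R 0 (Fin.last n) = true then 1 else 0)
            + (univ.filter fun a : Fin n => R a.succ (Fin.last n) = true).card := by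
        simpa [degB] using Fin.card_filter_univ_succ' (fun a : Fin (n+1) => R a (Fin.last n) = true)
      rw [h1, hrow0] at hsum
      simp at hsum
      intro a
      by_contra hc
      have ha : a ∈ (univ.filter fun a : Fin n => R a.succ (Fin.last n) = true) := by
        simp only [Finset.mem_filter, Finset.mem_univ, true_and]
        simpa using hc
      exact hc (@hsum a)
    set S : Fin n → Fin n → Bool := fun a b => R a.succ b.castSucc with hS
    have hA' : ∀ a : Fin n, degA S a = n - a.val := by
      intro a
      have hsplit : degA R a.succ = degA S a + (if R a.succ (Fin.last n) = true then 1 else 0) := by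
        rw [degA, degA, Finset.card_filter, Finset.card_filter, Fin.sum_univ_castSucc]
      rw [hlast a] at hsplit
      simp at hsplit
      have := hA a.succ
      rw [hsplit] at this
      simp [Fin.val_succ] at this
      omega
    have hB' : ∀ b : Fin n, degB S b = n - b.val := by
      intro b
      have hsplit : degB R b.castSucc
          = (if R 0 b.castSucc = true then 1 else 0) + degB S b := by
        simpa [degB] using Fin.card_filter_univ_succ' (fun a : Fin (n+1) => R a b.castSucc = true)
      rw [hrow0] at hsplit
      simp at hsplit
      have := hB b.castSucc
      rw [hsplit] at this
      simp [Fin.coe_castSucc] at this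
      omega
    have hSeq := ih S hA' hB'
    intro a b
    induction a using Fin.cases with
    | zero =>
      rw [hrow0 b]
      have hb : b.val < n + 1 := b.isLt
      have : (0:Fin (n+1)).val + b.val < n + 1 := by simpa using hb
      simp [this]
      omega
    | succ a =>
      induction b using Fin.lastCases with
      | last =>
        rw [hlast a]
        have : ¬ (a.succ.val + (Fin.last n).val < n + 1) := by
          simp only [Fin.val_succ, Fin.val_last]; omega
        exact (decide_eq_false this).symm
      | cast b =>
        have h1 := hSeq a b
        simp only [hS] at h1
        rw [h1]
        simp only [Fin.val_succ, Fin.coe_castSucc, decide_eq_decide]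
        omega


/-- From a degree sequence equal to `Pseq n`, build a sorting equivalence. -/
lemma exists_sort_equiv {n : ℕ} (d : Fin n → ℕ)
    (h : Multiset.map d Finset.univ.val = Pseq n) :
    ∃ f : Fin n ≃ Fin n, ∀ a, d (f a) = n - a.val := by
  have hbound : ∀ a, 1 ≤ d a ∧ d a ≤ n := by
    intro a
    apply mem_Pseq
    rw [← h]
    exact Multiset.mem_map.mpr ⟨a, Finset.mem_univ_val a, rfl⟩
  have hinj : Function.Injective d := by
    intro x y hxy
    have hnd : (Multiset.map d Finset.univ.val).Nodup := h ▸ Pseq_nodup n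
    exact Multiset.inj_on_of_nodup_map hnd x (Finset.mem_univ_val x) y
      (Finset.mem_univ_val y) hxy
  set e : Fin n → Fin n := fun a => ⟨n - d a, by have := hbound a; omega⟩ with he
  have heinj : Function.Injective e := by
    intro x y hxy
    apply hinj
    have h1 := hbound x; have h2 := hbound y
    have := Fin.mk.injEq .. ▸ hxy
    simp only [he, Fin.mk.injEq] at hxy
    omega
  let eq : Fin n ≃ Fin n := Equiv.ofBijective e (Finite.injective_iff_bijective.mp heinj)
  refine ⟨eq.symm, fun a => ?_⟩
  have : e (eq.symm a) = a := eq.apply_symm_apply a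
  have hv : n - d (eq.symm a) = a.val := congrArg Fin.val this
  have := hbound (eq.symm a)
  have ha := a.isLt
  omega

lemma exists_sorting {n : ℕ} (R : Fin n → Fin n → Bool)
    (hA : degSeqA R = Pseq n) (hB : degSeqB R = Pseq n) :
    ∃ f g : Fin n ≃ Fin n, ∀ a b, R (f a) (g b) = decide (a.val + b.val < n) := by
  obtain ⟨f, hf⟩ := exists_sort_equiv (degA R) hA
  obtain ⟨g, hg⟩ := exists_sort_equiv (degB R) hB
  refine ⟨f, g, ?_⟩
  apply sorted_key n (fun a b => R (f a) (g b))
  · intro a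
    rw [← hf a]
    exact card_reindex g (fun b => R (f a) b = true)
  · intro b
    rw [← hg b]
    exact card_reindex f (fun a => R a (g b) = true)

lemma degA_R0 {n : ℕ} (a : Fin n) :
    degA (fun a b : Fin n => decide (a.val + b.val < n)) a = n - a.val := by
  rw [degA]
  have h : (univ.filter fun b : Fin n => decide (a.val + b.val < n) = true)
      = univ.filter fun b : Fin n => b.val < n - a.val := by
    apply Finset.filter_congr
    intro b _
    have := a.isLt
    simp only [decide_eq_true_eq, eq_iff_iff]
    omega
  rw [h, card_filter_val_lt]
  omega

lemma degB_R0 {n : ℕ} (b : Fin n) :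
    degB (fun a b : Fin n => decide (a.val + b.val < n)) b = n - b.val := by
  rw [degB]
  have h : (univ.filter fun a : Fin n => decide (a.val + b.val < n) = true)
      = univ.filter fun a : Fin n => a.val < n - b.val := by
    apply Finset.filter_congr
    intro a _
    have := b.isLt
    simp only [decide_eq_true_eq, eq_iff_iff]
    omega
  rw [h, card_filter_val_lt]
  omega

/-- `(Pₙ, Pₙ)` is bigraphic, has a unique realization up to isomorphism, and every
realization is a mirror bipartite graph. -/
theorem stmt_6 (n : ℕ) (hn : 1 ≤ n) :
    (∃ R : Fin n → Fin n → Bool, degSeqA R = Pseq n ∧ degSeqB R = Pseq n) ∧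
    (∀ R S : Fin n → Fin n → Bool,
      degSeqA R = Pseq n → degSeqB R = Pseq n →
      degSeqA S = Pseq n → degSeqB S = Pseq n →
      ∃ (f g : Fin n ≃ Fin n), ∀ a b, S (f a) (g b) = R a b) ∧
    (∀ R : Fin n → Fin n → Bool,
      degSeqA R = Pseq n → degSeqB R = Pseq n → IsMirror R) := by
  refine ⟨⟨fun a b => decide (a.val + b.val < n), ?_, ?_⟩, ?_, ?_⟩
  · rw [degSeqA, ← Pseq_eq n]
    exact Multiset.map_congr rfl fun a _ => degA_R0 a
  · rw [degSeqB, ← Pseq_eq n]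
    exact Multiset.map_congr rfl fun b _ => degB_R0 b
  · intro R S hRA hRB hSA hSB
    obtain ⟨fR, gR, hR⟩ := exists_sorting R hRA hRB
    obtain ⟨fS, gS, hS⟩ := exists_sorting S hSA hSB
    refine ⟨fR.symm.trans fS, gR.symm.trans gS, fun a b => ?_⟩
    have h1 := hS (fR.symm a) (gR.symm b)
    have h2 := hR (fR.symm a) (gR.symm b)
    simp only [Equiv.apply_symm_apply] at h2
    simp only [Equiv.trans_apply]
    rw [h1, ← h2]
  · intro R hRA hRB
    obtain ⟨f, g, hR⟩ := exists_sorting R hRA hRB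
    refine ⟨f.symm.trans g, fun u v => ?_⟩
    have h1 := hR (f.symm u) (f.symm v)
    have h2 := hR (f.symm v) (f.symm u)
    simp only [Equiv.apply_symm_apply] at h1 h2
    simp only [Equiv.trans_apply]
    rw [h1, h2, decide_eq_decide]
    omega
end

section
/- Every 2-regular bipartite graph is a mirror bipartite graph. -/
open Finset

section AuxReversing
open Equiv Equiv.Perm in
lemma exists_reversing_involution {α : Type} [Fintype α] [DecidableEq α] (π : Equiv.Perm α) :
    ∃ ψ : Equiv.Perm α, ψ * ψ = 1 ∧ ψ * π * ψ = π⁻¹ := by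
  suffices h : ∃ ψ : Equiv.Perm α, ψ * ψ = 1 ∧ ψ * π * ψ = π⁻¹ ∧ ψ.support ≤ π.support by
    obtain ⟨ψ, ha, hb, _⟩ := h; exact ⟨ψ, ha, hb⟩
  induction π using Equiv.Perm.cycle_induction_on with
  | base_one => exact ⟨1, by simp, by simp, by simp⟩
  | base_cycles σ hσ =>
      obtain ⟨a, ha, hall⟩ := hσ
      classical
      have comp : ∀ (m n : ℤ) (x : α), (σ ^ m) ((σ ^ n) x) = (σ ^ (m + n)) x := by
        intro m n x; rw [← Equiv.Perm.mul_apply, ← zpow_add]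
      set F : α → α := fun x => if h : σ.SameCycle a x then (σ ^ (-(Classical.choose h))) a else x
        with hFdef
      have hF : ∀ k : ℤ, F ((σ ^ k) a) = (σ ^ (-k)) a := by
        intro k
        have h : σ.SameCycle a ((σ ^ k) a) := ⟨k, rfl⟩
        have hj : (σ ^ Classical.choose h) a = (σ ^ k) a := Classical.choose_spec h
        simp only [hFdef, dif_pos h]
        set j := Classical.choose h
        have e1 : (σ ^ (-k + j)) a = a := by
          rw [← comp, hj, comp, neg_add_cancel, zpow_zero]; rfl
        calc (σ ^ (-j)) a = (σ ^ (-j)) ((σ ^ (-k + j)) a) := by rw [e1]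
          _ = (σ ^ (-j + (-k + j))) a := comp _ _ _
          _ = (σ ^ (-k)) a := by ring_nf
      have hsc_of_move : ∀ x, ¬ σ.SameCycle a x → σ x = x := by
        intro x hx; by_contra hmove; exact hx (hall hmove)
      have hinv : Function.Involutive F := by
        intro x
        by_cases h : σ.SameCycle a x
        · obtain ⟨i, hi⟩ := h
          rw [← hi, hF, hF, neg_neg]
        · simp only [hFdef, dif_neg h]
      refine ⟨hinv.toPerm F, ?_, ?_, ?_⟩
      · ext x; simp [Function.Involutive.toPerm, hinv x]
      · ext x
        simp only [Equiv.Perm.mul_apply, Function.Involutive.toPerm, Equiv.coe_fn_mk]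
        by_cases h : σ.SameCycle a x
        · obtain ⟨i, hi⟩ := h
          rw [← hi, hF]
          have l1 : σ ((σ ^ (-i)) a) = (σ ^ (1 + -i)) a := by
            have := comp 1 (-i) a; rwa [zpow_one] at this
          have l2 : σ⁻¹ ((σ ^ i) a) = (σ ^ (-1 + i)) a := by
            have := comp (-1) i a; rwa [zpow_neg_one] at this
          rw [l1, hF, l2]
          have : -(1 + -i) = -1 + i := by ring
          rw [this]
        · have hfix : σ x = x := hsc_of_move x h
          have hFx : F x = x := by simp only [hFdef, dif_neg h]
          rw [hFx, hfix, hFx]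
          conv_rhs => rw [← hfix]
          simp
      · intro x hx
        rw [Equiv.Perm.mem_support] at hx ⊢
        simp only [Function.Involutive.toPerm, Equiv.coe_fn_mk] at hx
        intro hfix
        by_cases h : σ.SameCycle a x
        · obtain ⟨i, hi⟩ := h
          have e1 : (σ ^ (1 + i)) a = (σ ^ i) a := by
            rw [← comp, zpow_one, hi, hfix]
          have e2 : (σ ^ (i + 1)) a = (σ ^ i) (σ a) := by
            rw [← comp, zpow_one]
          rw [add_comm] at e1
          rw [e1] at e2
          exact ha ((σ ^ i).injective e2.symm)
        · exact hx (by simp only [hFdef, dif_neg h])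
  | induction_disjoint σ τ hd hc hσ hτ =>
      obtain ⟨ψs, hs2, hsc, hss⟩ := hσ
      obtain ⟨ψt, ht2, htc, hts⟩ := hτ
      have hd' : _root_.Disjoint σ.support τ.support :=
        Equiv.Perm.disjoint_iff_disjoint_support.mp hd
      have c1 : ψt * σ = σ * ψt :=
        ((Equiv.Perm.disjoint_iff_disjoint_support.mpr ((hd'.mono_right hts).symm)).commute).eq
      have c2 : τ * ψs = ψs * τ :=
        ((Equiv.Perm.disjoint_iff_disjoint_support.mpr ((hd'.mono_left hss).symm)).commute).eq
      have c3 : ψt * ψs = ψs * ψt :=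
        ((Equiv.Perm.disjoint_iff_disjoint_support.mpr ((hd'.mono hss hts).symm)).commute).eq
      refine ⟨ψs * ψt, ?_, ?_, ?_⟩
      · calc ψs * ψt * (ψs * ψt) = ψs * (ψt * ψs) * ψt := by group
          _ = ψs * (ψs * ψt) * ψt := by rw [c3]
          _ = (ψs * ψs) * (ψt * ψt) := by group
          _ = 1 := by rw [hs2, ht2, one_mul]
      · calc ψs * ψt * (σ * τ) * (ψs * ψt)
            = ψs * (ψt * σ) * ((τ * ψs) * ψt) := by group
          _ = ψs * (σ * ψt) * ((ψs * τ) * ψt) := by rw [c1, c2]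
          _ = (ψs * σ) * ((ψt * ψs) * (τ * ψt)) := by group
          _ = (ψs * σ) * ((ψs * ψt) * (τ * ψt)) := by rw [c3]
          _ = (ψs * σ * ψs) * (ψt * τ * ψt) := by group
          _ = σ⁻¹ * τ⁻¹ := by rw [hsc, htc]
          _ = (σ * τ)⁻¹ := by rw [mul_inv_rev, (hd.commute.inv_inv).eq]
      · calc (ψs * ψt).support ≤ ψs.support ⊔ ψt.support := Equiv.Perm.support_mul_le _ _
          _ ≤ σ.support ⊔ τ.support := sup_le_sup hss hts
          _ = (σ * τ).support := (hd.support_mul).symm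
end AuxReversing

/-- Every 2-regular bipartite graph is mirror. -/
theorem stmt_7 {α β : Type} [Fintype α] [Fintype β] (R : α → β → Bool)
    (h1 : ∀ a, degA R a = 2) (h2 : ∀ b, degB R b = 2) : IsMirror R := by
  letI : DecidableEq α := Classical.decEq α
  letI : DecidableEq β := Classical.decEq β
  set N : α → Finset β := fun a => univ.filter fun b => R a b = true with hNdef
  have hN : ∀ a, (N a).card = 2 := h1
  -- double counting inside any finsets
  have dbl : ∀ (s : Finset α) (t : Finset β),
      ∑ a ∈ s, (t.filter fun b => R a b = true).card
        = ∑ b ∈ t, (s.filter fun a => R a b = true).card := by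
    intro s t
    simp only [Finset.card_filter]
    exact Finset.sum_comm
  -- Hall's condition
  have hall : ∀ s : Finset α, s.card ≤ (s.biUnion N).card := by
    intro s
    set T := s.biUnion N with hT
    have hsub : ∀ a ∈ s, N a ⊆ T := fun a haa => Finset.subset_biUnion_of_mem N haa
    have e1 : ∀ a ∈ s, (T.filter fun b => R a b = true) = N a := by
      intro a haa
      apply Finset.Subset.antisymm
      · intro b hb
        simp only [Finset.mem_filter] at hb
        simp [hNdef, hb.2]
      · intro b hb
        have hb' := hb
        simp only [hNdef, Finset.mem_filter] at hb'
        exact Finset.mem_filter.mpr ⟨hsub a haa hb, hb'.2⟩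
    have e2 : 2 * s.card = ∑ a ∈ s, (T.filter fun b => R a b = true).card := by
      rw [Finset.sum_congr rfl fun a haa => by rw [e1 a haa]]
      simp [hN, mul_comm]
    have e3 : ∑ b ∈ T, (s.filter fun a => R a b = true).card ≤ 2 * T.card := by
      calc ∑ b ∈ T, (s.filter fun a => R a b = true).card
          ≤ ∑ _b ∈ T, 2 := by
            apply Finset.sum_le_sum
            intro b _
            calc (s.filter fun a => R a b = true).card
                ≤ (univ.filter fun a => R a b = true).card :=
                  Finset.card_le_card (Finset.filter_subset_filter _ (Finset.subset_univ s))
              _ = 2 := h2 b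
        _ = 2 * T.card := by simp [mul_comm]
    have := e2.trans_le ((dbl s T).trans_le e3)
    omega
  obtain ⟨f, hfinj, hfmem⟩ :=
    (Finset.all_card_le_biUnion_card_iff_exists_injective N).mp hall
  have hfR : ∀ a, R a (f a) = true := by
    intro a; have := hfmem a; simp only [hNdef, Finset.mem_filter] at this; exact this.2
  -- card α = card β
  have hcard : Fintype.card α = Fintype.card β := by
    have := dbl univ univ
    have this' : ∑ a : α, degA R a = ∑ b : β, degB R b := this
    have l1 : ∑ a : α, degA R a = 2 * Fintype.card α := by
      simp only [h1]
      rw [Finset.sum_const, smul_eq_mul, Finset.card_univ, mul_comm]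
    have l2 : ∑ b : β, degB R b = 2 * Fintype.card β := by
      simp only [h2]
      rw [Finset.sum_const, smul_eq_mul, Finset.card_univ, mul_comm]
    rw [l1, l2] at this'
    omega
  have hfbij : Function.Bijective f :=
    (Fintype.bijective_iff_injective_and_card f).mpr ⟨hfinj, hcard⟩
  set fE : α ≃ β := Equiv.ofBijective f hfbij with hfE
  -- the second neighbor g
  have hg : ∀ a, ∃ c, R a c = true ∧ c ≠ f a ∧ ∀ b, R a b = true → b = f a ∨ b = c := by
    intro a
    obtain ⟨x, y, hxy, hset⟩ := Finset.card_eq_two.mp (hN a)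
    have hfa : f a ∈ N a := hfmem a
    rw [hset] at hfa
    simp only [Finset.mem_insert, Finset.mem_singleton] at hfa
    have hmem : ∀ b, R a b = true ↔ b ∈ N a := by
      intro b; simp [hNdef]
    rcases hfa with h | h
    · refine ⟨y, ?_, by rw [h]; exact hxy.symm, ?_⟩
      · rw [hmem, hset]; simp
      · intro b hb; rw [hmem, hset] at hb; simp at hb; rw [h]; tauto
    · refine ⟨x, ?_, by rw [h]; exact hxy, ?_⟩
      · rw [hmem, hset]; simp
      · intro b hb; rw [hmem, hset] at hb; simp at hb; rw [h]; tauto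
  choose g hgR hgne hgall using hg
  have hginj : Function.Injective g := by
    intro a₁ a₂ hgg
    by_contra hne
    have hM : ({a₁, a₂} : Finset α) ⊆ univ.filter fun a => R a (g a₁) = true := by
      intro a haa
      simp only [Finset.mem_insert, Finset.mem_singleton] at haa
      simp only [Finset.mem_filter, Finset.mem_univ, true_and]
      rcases haa with h | h
      · rw [h]; exact hgR a₁
      · rw [h, hgg]; exact hgR a₂
    have hMeq : ({a₁, a₂} : Finset α) = univ.filter fun a => R a (g a₁) = true := by
      apply Finset.eq_of_subset_of_card_le hM
      have hdeg : (univ.filter fun a => R a (g a₁) = true).card = 2 := h2 (g a₁)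
      rw [hdeg, Finset.card_insert_of_notMem (by simp [hne]), Finset.card_singleton]
    have ha0 : fE.symm (g a₁) ∈ ({a₁, a₂} : Finset α) := by
      rw [hMeq]
      generalize hgen : fE.symm (g a₁) = a0
      have hfs : f a0 = g a₁ := by rw [← hgen]; exact fE.apply_symm_apply (g a₁)
      simp only [Finset.mem_filter, Finset.mem_univ, true_and]
      rw [← hfs]
      exact hfR a0
    simp only [Finset.mem_insert, Finset.mem_singleton] at ha0
    rcases ha0 with h | h
    · have : f a₁ = g a₁ := by
        conv_lhs => rw [← h]
        exact fE.apply_symm_apply (g a₁)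
      exact hgne a₁ this.symm
    · have : f a₂ = g a₁ := by
        conv_lhs => rw [← h]
        exact fE.apply_symm_apply (g a₁)
      exact hgne a₂ (by rw [hgg] at this; exact this.symm)
  have hgbij : Function.Bijective g :=
    (Fintype.bijective_iff_injective_and_card g).mpr ⟨hginj, hcard⟩
  set gE : α ≃ β := Equiv.ofBijective g hgbij with hgE
  set π : Equiv.Perm α := gE.trans fE.symm with hπ
  have hπa : ∀ a, f (π a) = g a := by
    intro a
    show f (fE.symm (g a)) = g a
    exact fE.apply_symm_apply (g a)
  obtain ⟨ψ, hψ2, hψc⟩ := exists_reversing_involution π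
  have hψ2' : ∀ x, ψ (ψ x) = x := by
    intro x
    rw [← Equiv.Perm.mul_apply, hψ2, Equiv.Perm.one_apply]
  have hψc' : ∀ x, ψ (π (ψ x)) = π⁻¹ x := by
    intro x
    rw [← Equiv.Perm.mul_apply, ← Equiv.Perm.mul_apply, hψc]
  -- the mirror bijection
  refine ⟨(ψ : Equiv.Perm α).trans fE, ?_⟩
  intro u v
  have hchar : ∀ w b, R w b = true ↔ (b = f w ∨ b = g w) := by
    intro w b
    constructor
    · exact hgall w b
    · rintro (rfl | rfl)
      · exact hfR w
      · exact hgR w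
  have key : ∀ w x, (f (ψ x) = f w ∨ f (ψ x) = g w) ↔ (ψ x = w ∨ ψ x = π w) := by
    intro w x
    rw [← hπa w]
    constructor
    · rintro (h | h) <;> [left; right] <;> exact hfinj h
    · rintro (h | h) <;> [left; right] <;> rw [h]
  have main : ∀ w x, (ψ x = w ∨ ψ x = π w) → (ψ w = x ∨ ψ w = π x) := by
    intro w x h
    rcases h with h | h
    · left; rw [← h, hψ2']
    · right
      have e1 : x = ψ (π w) := by rw [← h, hψ2']
      have e2 : ψ (π w) = π⁻¹ (ψ w) := by
        have := hψc' (ψ w)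
        rwa [hψ2'] at this
      rw [e1, e2]
      exact (π.apply_symm_apply (ψ w)).symm
  have : (R u (fE (ψ v)) = true) ↔ (R v (fE (ψ u)) = true) := by
    show (R u (f (ψ v)) = true) ↔ (R v (f (ψ u)) = true)
    rw [hchar, hchar, key, key]
    exact ⟨main u v, main v u⟩
  simp only [Equiv.trans_apply]
  exact Bool.eq_iff_iff.mpr (by exact_mod_cast this)
end

section
/- If G is a regular bipartite graph with stable sets of equal size n that is not a mirror bipartite graph, then n ≥ 6. -/
open Finset

/- ======================= auxiliary lemmas ======================= -/

lemma bool_ext {a b : Bool} (h : a = true ↔ b = true) : a = b := by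
  cases a <;> cases b <;> simp_all

set_option maxRecDepth 100000 in
lemma revFin : ∀ n, n ≤ 5 → ∀ σ : Fin n ≃ Fin n, ∃ τ : Fin n ≃ Fin n,
    (∀ x, τ (τ x) = x) ∧ ∀ x, τ (σ (τ x)) = σ.symm x := by
  intro n hn
  interval_cases n <;> decide

/-- A relation with all degrees one is (the graph of) a bijection. -/
lemma matching_one {α β : Type} [Fintype α] [Fintype β] (R : α → β → Bool)
    (h1 : ∀ a, (univ.filter fun b => R a b = true).card = 1)
    (h2 : ∀ b, (univ.filter fun a => R a b = true).card = 1) :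
    ∃ G : α ≃ β, ∀ a b, (R a b = true ↔ b = G a) := by
  classical
  choose f hf using fun a => Finset.card_eq_one.mp (h1 a)
  have key : ∀ a b, R a b = true ↔ b = f a := by
    intro a b
    constructor
    · intro h
      have : b ∈ ({f a} : Finset β) := by rw [← hf a]; simp [h]
      simpa using this
    · rintro rfl
      have : f a ∈ ({f a} : Finset β) := by simp
      rw [← hf a] at this
      simpa using this
  choose g hg using fun b => Finset.card_eq_one.mp (h2 b)
  have keyg : ∀ a b, R a b = true → a = g b := by
    intro a b h
    have : a ∈ ({g b} : Finset α) := by rw [← hg b]; simp [h]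
    simpa using this
  have hinj : Function.Injective f := by
    intro a a' h
    have h1' : a = g (f a) := keyg a (f a) ((key a (f a)).mpr rfl)
    have h2' : a' = g (f a') := keyg a' (f a') ((key a' (f a')).mpr rfl)
    rw [h1', h2', h]
  have hsurj : Function.Surjective f := by
    intro b
    have : (univ.filter fun a => R a b = true).Nonempty := by
      rw [← Finset.card_pos, h2 b]; norm_num
    obtain ⟨a, ha⟩ := this
    simp only [Finset.mem_filter] at ha
    exact ⟨a, ((key a b).mp ha.2).symm⟩
  exact ⟨Equiv.ofBijective f ⟨hinj, hsurj⟩, key⟩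

/-- Hall's condition for a 2-regular relation. -/
lemma hall_two {α β : Type} [Fintype α] [Fintype β] [DecidableEq α] [DecidableEq β]
    (R : α → β → Bool)
    (h1 : ∀ a, (univ.filter fun b => R a b = true).card = 2)
    (h2 : ∀ b, (univ.filter fun a => R a b = true).card = 2)
    (s : Finset α) :
    s.card ≤ (s.biUnion fun a => univ.filter fun b => R a b = true).card := by
  classical
  set t : α → Finset β := fun a => univ.filter fun b => R a b = true with ht
  set N := s.biUnion t with hN
  set P := (s ×ˢ (univ : Finset β)).filter (fun p => R p.1 p.2 = true) with hP
  have hP1 : P.card = 2 * s.card := by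
    rw [Finset.card_eq_sum_card_fiberwise (f := Prod.fst) (t := s)
      (fun p hp => by simp only [hP, Finset.mem_coe, Finset.mem_filter, Finset.mem_product] at hp; exact hp.1.1)]
    have : ∀ a ∈ s, (P.filter fun p => p.1 = a).card = 2 := by
      intro a ha
      have heq : P.filter (fun p => p.1 = a) = (t a).image (fun b => (a, b)) := by
        ext ⟨x, y⟩
        simp only [hP, ht, Finset.mem_filter, Finset.mem_product, Finset.mem_image,
          Finset.mem_univ, true_and, and_true, Prod.mk.injEq]
        constructor
        · rintro ⟨⟨hx, hR⟩, rfl⟩; exact ⟨y, hR, rfl, rfl⟩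
        · rintro ⟨b, hb, rfl, rfl⟩; exact ⟨⟨ha, hb⟩, rfl⟩
      rw [heq, Finset.card_image_of_injective _ (fun b b' h => by simpa using h)]
      exact h1 a
    rw [Finset.sum_congr rfl this, Finset.sum_const, smul_eq_mul, mul_comm]
  have hP2 : P.card ≤ 2 * N.card := by
    rw [Finset.card_eq_sum_card_fiberwise (f := Prod.snd) (t := N)
      (fun p hp => by
        simp only [hP, Finset.mem_coe, Finset.mem_filter, Finset.mem_product] at hp
        exact Finset.mem_biUnion.mpr ⟨p.1, hp.1.1, by simp [ht, hp.2]⟩)]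
    have hbd : ∀ b ∈ N, (P.filter fun p => p.2 = b).card ≤ 2 := by
      intro b hb
      have hsub : P.filter (fun p => p.2 = b) ⊆
          (univ.filter fun a => R a b = true).image (fun a => (a, b)) := by
        intro ⟨x, y⟩ hxy
        simp only [hP, Finset.mem_filter, Finset.mem_product] at hxy
        obtain ⟨⟨⟨hx, -⟩, hR⟩, rfl⟩ := hxy
        simp only [Finset.mem_image, Finset.mem_filter, Finset.mem_univ, true_and]
        exact ⟨x, hR, rfl⟩
      calc (P.filter fun p => p.2 = b).card
          ≤ ((univ.filter fun a => R a b = true).image (fun a => (a, b))).card :=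
            Finset.card_le_card hsub
        _ ≤ (univ.filter fun a => R a b = true).card := Finset.card_image_le
        _ = 2 := h2 b
    calc (∑ b ∈ N, (P.filter fun p => p.2 = b).card) ≤ ∑ _b ∈ N, 2 :=
          Finset.sum_le_sum hbd
      _ = 2 * N.card := by rw [Finset.sum_const, smul_eq_mul, mul_comm]
  omega

/-- A 2-regular relation on parts of equal size `n ≤ 5` is mirror. -/
lemma mirror_two {α β : Type} [Fintype α] [Fintype β] (R : α → β → Bool)
    (n : ℕ) (hα : Fintype.card α = n) (hβ : Fintype.card β = n) (hn : n ≤ 5)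
    (h1 : ∀ a, (univ.filter fun b => R a b = true).card = 2)
    (h2 : ∀ b, (univ.filter fun a => R a b = true).card = 2) :
    IsMirror R := by
  classical
  obtain ⟨f, hfinj, hfmem⟩ :=
    (Finset.all_card_le_biUnion_card_iff_exists_injective
      (fun a => univ.filter fun b => R a b = true)).mp (hall_two R h1 h2)
  have hfbij : Function.Bijective f :=
    (Fintype.bijective_iff_injective_and_card f).mpr ⟨hfinj, by rw [hα, hβ]⟩
  let F : α ≃ β := Equiv.ofBijective f hfbij
  have hRF : ∀ a, R a (F a) = true := by
    intro a
    have := hfmem a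
    simpa [F] using this
  set R' : α → β → Bool := fun a b => R a b && !(decide (b = F a)) with hR'
  have hmem' : ∀ a b, (R' a b = true ↔ (R a b = true ∧ ¬ b = F a)) := by
    intro a b; simp [hR']
  have h1' : ∀ a, (univ.filter fun b => R' a b = true).card = 1 := by
    intro a
    have heq : (univ.filter fun b => R' a b = true)
        = (univ.filter fun b => R a b = true).erase (F a) := by
      ext b
      simp only [Finset.mem_filter, Finset.mem_erase, Finset.mem_univ, true_and, hmem']
      tauto
    rw [heq, Finset.card_erase_of_mem (by simp [hRF a]), h1 a]
  have h2' : ∀ b, (univ.filter fun a => R' a b = true).card = 1 := by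
    intro b
    have hbF : ∀ a : α, b = F a ↔ a = F.symm b := by
      intro a
      constructor
      · rintro rfl; simp
      · rintro rfl; simp
    have heq : (univ.filter fun a => R' a b = true)
        = (univ.filter fun a => R a b = true).erase (F.symm b) := by
      ext a
      simp only [Finset.mem_filter, Finset.mem_erase, Finset.mem_univ, true_and, hmem', hbF]
      tauto
    have hRFb : R (F.symm b) b = true := by
      have := hRF (F.symm b)
      simpa using this
    rw [heq, Finset.card_erase_of_mem (by simp [hRFb]), h2 b]
  obtain ⟨G, hG⟩ := matching_one R' h1' h2'
  have hRG : ∀ a, R a (G a) = true ∧ ¬ G a = F a := fun a =>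
    (hmem' a (G a)).mp ((hG a (G a)).mpr rfl)
  have hchar : ∀ a b, (R a b = true ↔ (b = F a ∨ b = G a)) := by
    intro a b
    have hsub : ({F a, G a} : Finset β) ⊆ univ.filter (fun b => R a b = true) := by
      intro x hx
      simp only [Finset.mem_insert, Finset.mem_singleton] at hx
      rcases hx with rfl | rfl <;> simp [hRF a, (hRG a).1]
    have hcard : ({F a, G a} : Finset β).card = 2 := by
      rw [Finset.card_insert_of_notMem (by
        simp only [Finset.mem_singleton]
        exact fun h => (hRG a).2 h.symm), Finset.card_singleton]
    have hfe : univ.filter (fun b => R a b = true) = {F a, G a} :=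
      (Finset.eq_of_subset_of_card_le hsub (by rw [h1 a, hcard])).symm
    constructor
    · intro h
      have : b ∈ univ.filter (fun b => R a b = true) := by simp [h]
      rw [hfe] at this
      simpa using this
    · intro h
      have : b ∈ ({F a, G a} : Finset β) := by simpa using h
      rw [← hfe] at this
      simpa using this
  -- the permutation linking the two matchings
  let σ : α ≃ α := G.trans F.symm
  let e : α ≃ Fin n := Fintype.equivFinOfCardEq hα
  obtain ⟨τ', hτ1, hτ2⟩ := revFin n hn (e.symm.trans (σ.trans e))
  let τ : α ≃ α := e.trans (τ'.trans e.symm)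
  have hτi : ∀ x, τ (τ x) = x := by
    intro x
    simp only [τ, Equiv.trans_apply]
    rw [Equiv.apply_symm_apply, hτ1, Equiv.symm_apply_apply]
  have hτσ : ∀ x, τ (σ (τ x)) = σ.symm x := by
    intro x
    have h := hτ2 (e x)
    simp only [Equiv.trans_apply, Equiv.symm_trans_apply, Equiv.symm_symm,
      Equiv.symm_apply_apply] at h
    simp only [τ, Equiv.trans_apply]
    rw [h, Equiv.symm_apply_apply]
  -- key symmetry property of τ
  have hkey : ∀ u v : α, τ v = u ∨ τ v = σ u → τ u = v ∨ τ u = σ v := by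
    intro u v h
    rcases h with h | h
    · left; rw [← h, hτi]
    · right
      have h1'' : τ (σ u) = σ.symm (τ u) := by
        have := hτσ (τ u)
        rwa [hτi u] at this
      have : v = σ.symm (τ u) := by rw [← h1'', ← h, hτi]
      rw [this, Equiv.apply_symm_apply]
  refine ⟨τ.trans F, fun u v => bool_ext ?_⟩
  simp only [Equiv.trans_apply]
  rw [hchar u (F (τ v)), hchar v (F (τ u))]
  have hFinj := F.injective
  have hstep : ∀ x y : α, (F (τ x) = F y ∨ F (τ x) = G y) ↔ (τ x = y ∨ τ x = σ y) := by
    intro x y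
    constructor
    · rintro (h | h)
      · exact Or.inl (hFinj h)
      · right
        have : τ x = F.symm (G y) := by rw [← h, Equiv.symm_apply_apply]
        exact this
    · rintro (h | h)
      · exact Or.inl (congrArg F h)
      · right
        rw [h]
        show F (F.symm (G y)) = G y
        rw [Equiv.apply_symm_apply]
  rw [hstep v u, hstep u v]
  exact ⟨hkey u v, hkey v u⟩

/-- A relation with left degrees `r ≤ 2` (and right degrees `r`) on parts of
equal size `n ≤ 5` is mirror. -/
lemma mirror_small {α β : Type} [Fintype α] [Fintype β] (R : α → β → Bool)
    (n r : ℕ) (hα : Fintype.card α = n) (hβ : Fintype.card β = n) (hn : n ≤ 5)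
    (h1 : ∀ a, (univ.filter fun b => R a b = true).card = r)
    (h2 : ∀ b, (univ.filter fun a => R a b = true).card = r)
    (hr : r ≤ 2) : IsMirror R := by
  classical
  interval_cases r
  · -- r = 0 : no edges at all
    have hz : ∀ a b, R a b = false := by
      intro a b
      by_contra h
      have hb : R a b = true := by simpa using h
      have : b ∈ univ.filter (fun b => R a b = true) := by simp [hb]
      rw [Finset.card_eq_zero.mp (h1 a)] at this
      simp at this
    exact ⟨Fintype.equivOfCardEq (hα.trans hβ.symm), fun u v => by rw [hz, hz]⟩
  · obtain ⟨G, hG⟩ := matching_one R h1 h2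
    refine ⟨G, fun u v => bool_ext ?_⟩
    rw [hG u (G v), hG v (G u)]
    constructor
    · intro h; rw [G.injective h]
    · intro h; rw [G.injective h]
  · exact mirror_two R n hα hβ hn h1 h2

/-- If the bipartite complement is mirror, so is the original. -/
lemma mirror_of_compl {α β : Type} (R : α → β → Bool)
    (h : IsMirror (fun a b => !R a b)) : IsMirror R := by
  obtain ⟨φ, hφ⟩ := h
  refine ⟨φ, fun u v => ?_⟩
  have := hφ u v
  simp only at this
  cases h1 : R u (φ v) <;> cases h2 : R v (φ u) <;> simp_all

/-- A regular bipartite graph with stable sets of equal size `n` which is not mirror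
must have `n ≥ 6`. -/
theorem stmt_9 {α β : Type} [Fintype α] [Fintype β] (R : α → β → Bool) (n r : ℕ)
    (hα : Fintype.card α = n) (hβ : Fintype.card β = n)
    (h1 : ∀ a, degA R a = r) (h2 : ∀ b, degB R b = r)
    (hnm : ¬ IsMirror R) : 6 ≤ n := by
  classical
  by_contra hn6
  push_neg at hn6
  have hn : n ≤ 5 := by omega
  apply hnm
  simp only [degA] at h1
  simp only [degB] at h2
  rcases Nat.eq_zero_or_pos n with rfl | hn0
  · have hA : IsEmpty α := Fintype.card_eq_zero_iff.mp hα
    exact ⟨Fintype.equivOfCardEq (hα.trans hβ.symm), fun u => hA.elim u⟩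
  · have a0 : α := (Fintype.card_pos_iff.mp (by omega : 0 < Fintype.card α)).some
    have hrn : r ≤ n := by
      rw [← h1 a0, ← hβ, ← Finset.card_univ]
      exact Finset.card_le_card (Finset.filter_subset _ _)
    rcases le_or_gt r 2 with hr | hr
    · exact mirror_small R n r hα hβ hn h1 h2 hr
    · apply mirror_of_compl
      have hc1 : ∀ a, (univ.filter fun b => (!R a b) = true).card = n - r := by
        intro a
        have heq : (univ.filter fun b => (!R a b) = true)
            = univ \ (univ.filter fun b => R a b = true) := by
          ext b; simp
        rw [heq, Finset.card_sdiff_of_subset (Finset.filter_subset _ _), h1, Finset.card_univ, hβ]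
      have hc2 : ∀ b, (univ.filter fun a => (!R a b) = true).card = n - r := by
        intro b
        have heq : (univ.filter fun a => (!R a b) = true)
            = univ \ (univ.filter fun a => R a b = true) := by
          ext a; simp
        rw [heq, Finset.card_sdiff_of_subset (Finset.filter_subset _ _), h2, Finset.card_univ, hα]
      exact mirror_small _ n (n - r) hα hβ hn hc1 hc2 (by omega)
end

section
/- Every 3-regular bipartite graph with stable sets of size at most 5 is a mirror bipartite graph. -/
open Finset

section Aux

set_option maxRecDepth 40000 in
/-- Every permutation of `Fin 5` is reversed by an involution. -/
lemma aux_rev5 : ∀ σ : Equiv.Perm (Fin 5), ∃ ψ : Equiv.Perm (Fin 5),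
    (∀ x, ψ (ψ x) = x) ∧ ∀ x, ψ (σ (ψ x)) = σ.symm x := by decide

/-- Mirror from a decomposition of the complement into two matchings plus
a reversing involution. -/
lemma aux_mirror_two {α β : Type} (R : α → β → Bool)
    (p q : α ≃ β) (ψ : α ≃ α)
    (h : ∀ u b, R u b = false ↔ b = p u ∨ b = q u)
    (hinv : ∀ x, ψ (ψ x) = x)
    (hrev : ∀ x, ψ (p.symm (q (ψ x))) = q.symm (p x)) :
    IsMirror R := by
  have step : ∀ u v : α, ψ v = p.symm (q u) → ψ u = p.symm (q v) := by
    intro u v hv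
    have h1 := hrev (ψ u)
    rw [hinv u, ← hv, hinv v] at h1
    have : q v = p (ψ u) := by rw [h1, Equiv.apply_symm_apply]
    rw [this, Equiv.symm_apply_apply]
  have key : ∀ u v : α, (R u (p (ψ v)) = false) ↔ (R v (p (ψ u)) = false) := by
    have main : ∀ u v : α, R u (p (ψ v)) = false → R v (p (ψ u)) = false := by
      intro u v huv
      rw [h] at huv ⊢
      rcases huv with h1 | h1
      · left
        have : ψ v = u := p.injective h1
        rw [← this, hinv]
      · right
        have : ψ v = p.symm (q u) := by rw [← h1, Equiv.symm_apply_apply]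
        have := step u v this
        rw [this, Equiv.apply_symm_apply]
    exact fun u v => ⟨main u v, main v u⟩
  refine ⟨ψ.trans p, fun u v => ?_⟩
  simp only [Equiv.trans_apply]
  cases hb : R u (p (ψ v)) <;> cases hc : R v (p (ψ u))
  · rfl
  · rw [(key u v).mp hb] at hc; exact hc.symm ▸ rfl
  · rw [(key u v).mpr hc] at hb; exact hb ▸ rfl
  · rfl

/-- Hall-type matching in the complement of a graph whose complement is 2-regular. -/
lemma aux_matching {α β : Type} [Fintype α] [Fintype β] [DecidableEq α] [DecidableEq β]
    (R : α → β → Bool)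
    (hrow : ∀ a, (univ.filter fun b => R a b = false).card = 2)
    (hcol : ∀ b, (univ.filter fun a => R a b = false).card = 2) :
    ∃ f : α → β, Function.Injective f ∧ ∀ a, R a (f a) = false := by
  set t : α → Finset β := fun a => univ.filter fun b => R a b = false with ht
  have hall : ∀ s : Finset α, s.card ≤ (s.biUnion t).card := by
    intro s
    set E := s.biUnion t with hE
    have key : 2 * s.card ≤ 2 * E.card := by
      calc 2 * s.card = ∑ a ∈ s, (t a).card := by
            rw [Finset.sum_congr rfl fun a _ => hrow a]; simp [mul_comm]
      _ = ∑ a ∈ s, (E.filter fun b => R a b = false).card := by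
            refine Finset.sum_congr rfl fun a ha => ?_
            congr 1
            ext b
            simp only [mem_filter, ht, mem_univ, true_and]
            exact ⟨fun hb => ⟨Finset.mem_biUnion.mpr ⟨a, ha,
              Finset.mem_filter.mpr ⟨Finset.mem_univ b, hb⟩⟩, hb⟩, And.right⟩
      _ = ∑ a ∈ s, ∑ b ∈ E, (if R a b = false then 1 else 0) := by
            refine Finset.sum_congr rfl fun a _ => ?_
            rw [Finset.card_filter]
      _ = ∑ b ∈ E, ∑ a ∈ s, (if R a b = false then 1 else 0) := Finset.sum_comm
      _ = ∑ b ∈ E, (s.filter fun a => R a b = false).card := by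
            refine Finset.sum_congr rfl fun b _ => ?_
            rw [Finset.card_filter]
      _ ≤ ∑ b ∈ E, 2 := by
            refine Finset.sum_le_sum fun b _ => ?_
            rw [← hcol b]
            exact Finset.card_le_card (Finset.filter_subset_filter _ (Finset.subset_univ s))
      _ = 2 * E.card := by rw [Finset.sum_const, smul_eq_mul, mul_comm]
    omega
  obtain ⟨f, hf, hft⟩ := (Finset.all_card_le_biUnion_card_iff_exists_injective t).mp hall
  refine ⟨f, hf, fun a => ?_⟩
  have := hft a
  simp only [ht, mem_filter] at this
  exact this.2

end Aux

/-- Every 3-regular bipartite graph with stable sets of size at most 5 is mirror. -/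
theorem stmt_10 {α β : Type} [Fintype α] [Fintype β] (R : α → β → Bool)
    (hα : Fintype.card α ≤ 5) (hβ : Fintype.card β ≤ 5)
    (h1 : ∀ a, degA R a = 3) (h2 : ∀ b, degB R b = 3) : IsMirror R := by
  classical
  -- the two sides have equal cardinality
  have hcard : Fintype.card α = Fintype.card β := by
    have key : 3 * Fintype.card α = 3 * Fintype.card β := by
      calc 3 * Fintype.card α = ∑ a : α, degA R a := by simp [h1, mul_comm]
      _ = ∑ a : α, ∑ b : β, (if R a b = true then 1 else 0) := by
          refine Finset.sum_congr rfl fun a _ => ?_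
          rw [degA, Finset.card_filter]
      _ = ∑ b : β, ∑ a : α, (if R a b = true then 1 else 0) := Finset.sum_comm
      _ = ∑ b : β, degB R b := by
          refine Finset.sum_congr rfl fun b _ => ?_
          rw [degB, Finset.card_filter]
      _ = 3 * Fintype.card β := by simp [h2, mul_comm]
    omega
  rcases Nat.eq_zero_or_pos (Fintype.card β) with h0 | hpos
  · -- empty case
    have : Fintype.card α = 0 := by omega
    have hempty : IsEmpty α := Fintype.card_eq_zero_iff.mp this
    exact ⟨Fintype.equivOfCardEq hcard, fun u v => (hempty.false u).elim⟩
  · -- nonempty: 3 ≤ card β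
    have hbne : Nonempty β := Fintype.card_pos_iff.mp hpos
    obtain ⟨b0⟩ := hbne
    have h3a : 3 ≤ Fintype.card α := by
      rw [← h2 b0]
      exact (Finset.card_filter_le _ _).trans (le_of_eq (Finset.card_univ))
    have h3b : 3 ≤ Fintype.card β := by omega
    -- row and column complement counts
    have hrow : ∀ a, (univ.filter fun b => R a b = false).card = Fintype.card β - 3 := by
      intro a
      have := Finset.card_filter_add_card_filter_not
        (s := (univ : Finset β)) (p := fun b => R a b = true)
      have hsub : (univ.filter fun b => ¬ (R a b = true)) =
          (univ.filter fun b => R a b = false) := by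
        refine Finset.filter_congr fun b _ => ?_
        simp [Bool.not_eq_true]
      rw [hsub] at this
      have hA := h1 a
      rw [degA] at hA
      rw [Finset.card_univ] at this
      omega
    have hcol : ∀ b, (univ.filter fun a => R a b = false).card = Fintype.card α - 3 := by
      intro b
      have := Finset.card_filter_add_card_filter_not
        (s := (univ : Finset α)) (p := fun a => R a b = true)
      have hsub : (univ.filter fun a => ¬ (R a b = true)) =
          (univ.filter fun a => R a b = false) := by
        refine Finset.filter_congr fun a _ => ?_
        simp [Bool.not_eq_true]
      rw [hsub] at this
      have hB := h2 b
      rw [degB] at hB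
      rw [Finset.card_univ] at this
      omega
    have hc345 : Fintype.card β = 3 ∨ Fintype.card β = 4 ∨ Fintype.card β = 5 := by omega
    rcases hc345 with hc | hc | hc
    · -- card = 3 : complete bipartite, all entries true
      have hall : ∀ a b, R a b = true := by
        intro a b
        have hcardf : (univ.filter fun b => R a b = true).card = Fintype.card β := by
          have hA := h1 a
          rw [degA] at hA
          rw [hA, hc]
        have huniv : (univ.filter fun b => R a b = true) = univ :=
          Finset.eq_univ_of_card _ hcardf
        have hb : b ∈ univ.filter fun b => R a b = true := by
          rw [huniv]; exact Finset.mem_univ b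
        exact (Finset.mem_filter.mp hb).2
      exact ⟨Fintype.equivOfCardEq hcard, fun u v => by rw [hall, hall]⟩
    · -- card = 4 : complement is a perfect matching
      have hrow1 : ∀ a, (univ.filter fun b => R a b = false).card = 1 := by
        intro a; rw [hrow a, hc]
      have hcol1 : ∀ b, (univ.filter fun a => R a b = false).card = 1 := by
        intro b; rw [hcol b, hcard, hc]
      choose f hf using fun a => Finset.card_eq_one.mp (hrow1 a)
      have hmem : ∀ a b, R a b = false ↔ b = f a := by
        intro a b
        constructor
        · intro hb
          have : b ∈ univ.filter fun b => R a b = false :=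
            Finset.mem_filter.mpr ⟨Finset.mem_univ b, hb⟩
          rw [hf a] at this
          exact Finset.mem_singleton.mp this
        · intro hb
          have : f a ∈ univ.filter fun b => R a b = false := by
            rw [hf a]; exact Finset.mem_singleton_self _
          rw [hb]; exact (Finset.mem_filter.mp this).2
      have hinj : Function.Injective f := by
        intro a1 a2 hf12
        have m1 : a1 ∈ univ.filter fun a => R a (f a1) = false :=
          Finset.mem_filter.mpr ⟨Finset.mem_univ _, (hmem a1 (f a1)).mpr rfl⟩
        have m2 : a2 ∈ univ.filter fun a => R a (f a1) = false :=
          Finset.mem_filter.mpr ⟨Finset.mem_univ _, (hmem a2 (f a1)).mpr hf12⟩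
        exact Finset.card_le_one.mp (le_of_eq (hcol1 (f a1))) a1 (by exact m1) a2 m2
      have hbij : Function.Bijective f :=
        (Fintype.bijective_iff_injective_and_card f).mpr ⟨hinj, hcard⟩
      set p : α ≃ β := Equiv.ofBijective f hbij with hp
      refine aux_mirror_two R p p (Equiv.refl α) ?_ (fun x => rfl) (fun x => rfl)
      intro u b
      rw [hmem u b]
      simp [hp, Equiv.ofBijective]
    · -- card = 5 : complement is 2-regular
      have hrow2 : ∀ a, (univ.filter fun b => R a b = false).card = 2 := by
        intro a; rw [hrow a, hc]
      have hcol2 : ∀ b, (univ.filter fun a => R a b = false).card = 2 := by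
        intro b; rw [hcol b, hcard, hc]
      obtain ⟨f, hfinj, hfval⟩ := aux_matching R hrow2 hcol2
      have hbijf : Function.Bijective f :=
        (Fintype.bijective_iff_injective_and_card f).mpr ⟨hfinj, hcard⟩
      set p : α ≃ β := Equiv.ofBijective f hbijf with hpdef
      have hpval : ∀ a, R a (p a) = false := hfval
      -- the second matching
      have herase : ∀ a, ((univ.filter fun b => R a b = false).erase (p a)).card = 1 := by
        intro a
        have hm : (p a) ∈ (univ.filter fun b => R a b = false) :=
          Finset.mem_filter.mpr ⟨Finset.mem_univ (p a), hpval a⟩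
        rw [Finset.card_erase_of_mem hm, hrow2 a]
      choose g hg using fun a => Finset.card_eq_one.mp (herase a)
      have hgmem : ∀ a, g a ∈ (univ.filter fun b => R a b = false).erase (p a) := by
        intro a; rw [hg a]; exact Finset.mem_singleton_self _
      have hgne : ∀ a, g a ≠ p a := fun a => (Finset.mem_erase.mp (hgmem a)).1
      have hgval : ∀ a, R a (g a) = false := fun a =>
        (Finset.mem_filter.mp (Finset.mem_of_mem_erase (hgmem a))).2
      have hmem2 : ∀ a b, R a b = false ↔ b = p a ∨ b = g a := by
        intro a b
        constructor
        · intro hb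
          by_cases hbp : b = p a
          · exact Or.inl hbp
          · right
            have : b ∈ (univ.filter fun b => R a b = false).erase (p a) :=
              Finset.mem_erase.mpr ⟨hbp, Finset.mem_filter.mpr ⟨Finset.mem_univ b, hb⟩⟩
            rw [hg a] at this
            exact Finset.mem_singleton.mp this
        · rintro (hb | hb)
          · rw [hb]; exact hpval a
          · rw [hb]; exact hgval a
      have hginj : Function.Injective g := by
        intro a1 a2 h12
        by_contra hne
        have hpa0 : p (p.symm (g a1)) = g a1 := Equiv.apply_symm_apply p (g a1)
        have hm0 : p.symm (g a1) ∈ univ.filter fun a => R a (g a1) = false := by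
          refine Finset.mem_filter.mpr ⟨Finset.mem_univ _, ?_⟩
          have h0 := hpval (p.symm (g a1))
          rw [hpa0] at h0
          exact h0
        have hm1 : a1 ∈ univ.filter fun a => R a (g a1) = false :=
          Finset.mem_filter.mpr ⟨Finset.mem_univ _, hgval a1⟩
        have hm2 : a2 ∈ univ.filter fun a => R a (g a1) = false := by
          refine Finset.mem_filter.mpr ⟨Finset.mem_univ _, ?_⟩
          rw [h12]; exact hgval a2
        have hne01 : p.symm (g a1) ≠ a1 := fun hh =>
          hgne a1 (hpa0.symm.trans (congrArg p hh))
        have hne02 : p.symm (g a1) ≠ a2 := fun hh =>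
          hgne a2 (h12.symm.trans (hpa0.symm.trans (congrArg p hh)))
        have hsub : ({p.symm (g a1), a1, a2} : Finset α) ⊆
            univ.filter fun a => R a (g a1) = false := by
          intro x hx
          simp only [Finset.mem_insert, Finset.mem_singleton] at hx
          rcases hx with rfl | rfl | rfl
          · exact hm0
          · exact hm1
          · exact hm2
        have hcard3 : ({p.symm (g a1), a1, a2} : Finset α).card = 3 := by
          rw [Finset.card_insert_of_notMem, Finset.card_insert_of_notMem,
            Finset.card_singleton]
          · simpa using hne
          · simp only [Finset.mem_insert, Finset.mem_singleton]
            push_neg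
            exact ⟨hne01, hne02⟩
        have := Finset.card_le_card hsub
        rw [hcard3, hcol2 (g a1)] at this
        omega
      have hbijg : Function.Bijective g :=
        (Fintype.bijective_iff_injective_and_card g).mpr ⟨hginj, hcard⟩
      set q : α ≃ β := Equiv.ofBijective g hbijg with hqdef
      have hqval : ∀ a, q a = g a := fun a => rfl
      -- the reversing involution via Fin 5
      have hca5 : Fintype.card α = 5 := by omega
      set e5 : α ≃ Fin 5 := Fintype.equivFinOfCardEq hca5 with he5
      set σ : α ≃ α := q.trans p.symm with hσ
      set σ' : Equiv.Perm (Fin 5) := (e5.symm.trans σ).trans e5 with hσ'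
      obtain ⟨ψ', hψ'1, hψ'2⟩ := aux_rev5 σ'
      set ψ : α ≃ α := (e5.trans ψ').trans e5.symm with hψ
      have hinv : ∀ x, ψ (ψ x) = x := by
        intro x
        simp only [hψ, Equiv.trans_apply, Equiv.apply_symm_apply]
        rw [hψ'1, Equiv.symm_apply_apply]
      have hconj : ∀ x, ψ (σ (ψ x)) = σ.symm x := by
        intro x
        have h2' := hψ'2 (e5 x)
        simp only [hσ', Equiv.trans_apply, Equiv.symm_trans_apply, Equiv.symm_symm,
          Equiv.symm_apply_apply, Equiv.apply_symm_apply] at h2'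
        simp only [hψ, Equiv.trans_apply]
        rw [h2', Equiv.symm_apply_apply]
      refine aux_mirror_two R p q ψ (fun u b => hmem2 u b) hinv ?_
      intro x
      have := hconj x
      simp only [hσ, Equiv.trans_apply, Equiv.symm_trans_apply, Equiv.symm_symm] at this
      exact this
end

section
/- For every set 𝒫 = {p₁ > p₂ > … > p_k} of positive integers, there exists a bipartite graph with both stable sets of size p₁ whose degree set (the set of degrees of its vertices) in each stable set equals 𝒫; moreover, such a graph can be chosen to be a mirror bipartite graph. -/
open Finset

def sfun (P : Finset ℕ) (i : ℕ) : ℕ := (P.filter fun p => i < p).card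

lemma sfun_le (P : Finset ℕ) (i : ℕ) : sfun P i ≤ P.card := card_filter_le _ _

lemma sfun_anti (P : Finset ℕ) {i j : ℕ} (h : i ≤ j) : sfun P j ≤ sfun P i := by
  apply card_le_card
  intro p hp
  rw [mem_filter] at hp ⊢
  exact ⟨hp.1, by omega⟩

lemma sfun_zero (P : Finset ℕ) (hpos : ∀ p ∈ P, 0 < p) : sfun P 0 = P.card := by
  unfold sfun; rw [filter_true_of_mem hpos]

lemma sfun_max (P : Finset ℕ) (hP : P.Nonempty) : sfun P (P.max' hP) = 0 := by
  unfold sfun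
  rw [card_eq_zero, filter_eq_empty_iff]
  intro p hp h
  exact absurd (P.le_max' p hp) (by omega)

lemma sfun_step (P : Finset ℕ) (i : ℕ) :
    sfun P i = sfun P (i + 1) + (if i + 1 ∈ P then 1 else 0) := by
  unfold sfun
  have h1 : P.filter (fun p => i < p) = P.filter (fun p => i + 1 < p ∨ p = i + 1) :=
    filter_congr (by intro p _; constructor <;> (intro h; omega))
  rw [h1, filter_or, card_union_of_disjoint, filter_eq']
  · split_ifs <;> simp
  · simp [disjoint_left]
    intro a h h'; omega

noncomputable def cfun (P : Finset ℕ) (t : ℕ) : ℕ := sInf {i | sfun P i < t}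

lemma cfun_exists (P : Finset ℕ) (hP : P.Nonempty) {t : ℕ} (ht : 1 ≤ t) :
    {i | sfun P i < t}.Nonempty :=
  ⟨P.max' hP, by simp [sfun_max P hP]; omega⟩

lemma sfun_cfun_lt (P : Finset ℕ) (hP : P.Nonempty) {t : ℕ} (ht : 1 ≤ t) :
    sfun P (cfun P t) < t := Nat.sInf_mem (cfun_exists P hP ht)

lemma le_sfun_of_lt_cfun (P : Finset ℕ) {t i : ℕ} (h : i < cfun P t) : t ≤ sfun P i := by
  by_contra hc
  have hmem : i ∈ {j | sfun P j < t} := Set.mem_setOf.mpr (by omega)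
  have := Nat.sInf_le hmem
  unfold cfun at h
  omega

lemma cfun_le_max (P : Finset ℕ) (hP : P.Nonempty) {t : ℕ} (ht : 1 ≤ t) :
    cfun P t ≤ P.max' hP :=
  Nat.sInf_le (Set.mem_setOf.mpr (by rw [sfun_max P hP]; omega))

lemma cfun_props (P : Finset ℕ) (hP : P.Nonempty) (hpos : ∀ p ∈ P, 0 < p)
    {t : ℕ} (ht1 : 1 ≤ t) (htk : t ≤ P.card) :
    cfun P t ∈ P ∧ sfun P (cfun P t) = t - 1 ∧ sfun P (cfun P t - 1) = t := by
  have hlt := sfun_cfun_lt P hP ht1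
  have hc1 : 1 ≤ cfun P t := by
    rcases Nat.eq_zero_or_pos (cfun P t) with h | h
    · rw [h, sfun_zero P hpos] at hlt; omega
    · exact h
  obtain ⟨i, hi⟩ : ∃ i, cfun P t = i + 1 := ⟨cfun P t - 1, by omega⟩
  have hgei : t ≤ sfun P i := le_sfun_of_lt_cfun P (by omega)
  have hstep := sfun_step P i
  rw [← hi] at hstep
  split_ifs at hstep with hmem
  · refine ⟨hi ▸ hmem, by omega, ?_⟩
    rw [hi]
    simp only [Nat.add_sub_cancel]
    omega
  · omega

lemma cfun_of_mem (P : Finset ℕ) (hpos : ∀ p ∈ P, 0 < p) {p : ℕ} (hp : p ∈ P) :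
    cfun P (sfun P (p - 1)) = p ∧ 1 ≤ sfun P (p - 1) := by
  have hp1 : 1 ≤ p := hpos p hp
  have ht1 : 1 ≤ sfun P (p - 1) := by
    have : p ∈ P.filter (fun q => p - 1 < q) := mem_filter.mpr ⟨hp, by omega⟩
    exact card_pos.mpr ⟨p, this⟩
  have hstep := sfun_step P (p - 1)
  rw [show p - 1 + 1 = p by omega, if_pos hp] at hstep
  have hpm : p ∈ {i | sfun P i < sfun P (p - 1)} := Set.mem_setOf.mpr (by omega)
  refine ⟨le_antisymm (Nat.sInf_le hpm) ?_, ht1⟩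
  by_contra hc
  have hlt : cfun P (sfun P (p - 1)) < p := Nat.lt_of_not_le hc
  have h1 : sfun P (cfun P (sfun P (p - 1))) < sfun P (p - 1) := Nat.sInf_mem ⟨p, hpm⟩
  have h2 : sfun P (p - 1) ≤ sfun P (cfun P (sfun P (p - 1))) := sfun_anti P (by omega)
  omega

lemma filter_range_eq (P : Finset ℕ) (hP : P.Nonempty) {t : ℕ} (ht : 1 ≤ t) :
    ((range (P.max' hP)).filter fun j => t ≤ sfun P j) = range (cfun P t) := by
  ext j
  simp only [mem_filter, mem_range]
  constructor
  · rintro ⟨hjm, hjt⟩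
    by_contra hc
    have h1 : sfun P j ≤ sfun P (cfun P t) := sfun_anti P (by omega)
    have := sfun_cfun_lt P hP ht
    omega
  · intro hj
    exact ⟨lt_of_lt_of_le hj (cfun_le_max P hP ht), le_sfun_of_lt_cfun P hj⟩

lemma card_fin_filter (n : ℕ) (Q : ℕ → Prop) [DecidablePred Q] :
    ((univ : Finset (Fin n)).filter fun j => Q j.val).card = ((range n).filter Q).card := by
  rw [← Nat.Iio_eq_range, ← Fin.map_valEmbedding_univ, filter_map, card_map]
  rfl

lemma sfun_pos_of_lt_max (P : Finset ℕ) (hP : P.Nonempty) {i : ℕ} (hi : i < P.max' hP) :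
    1 ≤ sfun P i :=
  card_pos.mpr ⟨P.max' hP, mem_filter.mpr ⟨P.max'_mem hP, hi⟩⟩

/-- For every set $\mathcal P$ of positive integers there is a mirror bipartite graph
with both stable sets of size $\max \mathcal P$ whose degree set on each side is $\mathcal P$. -/
theorem stmt_13 (P : Finset ℕ) (hP : P.Nonempty) (hpos : ∀ p ∈ P, 0 < p) :
    ∃ R : Fin (P.max' hP) → Fin (P.max' hP) → Bool,
      IsMirror R ∧ Finset.image (degA R) Finset.univ = P ∧
        Finset.image (degB R) Finset.univ = P := by
  classical
  set m := P.max' hP with hm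
  set k := P.card with hk
  refine ⟨fun i j => decide (k + 1 ≤ sfun P i.val + sfun P j.val), ?_, ?_⟩
  · exact ⟨Equiv.refl _, fun u v => by simp [Nat.add_comm]⟩
  have hdegAB : ∀ b, degB (fun i j : Fin m => decide (k + 1 ≤ sfun P i.val + sfun P j.val)) b
      = degA (fun i j : Fin m => decide (k + 1 ≤ sfun P i.val + sfun P j.val)) b := by
    intro b
    unfold degA degB
    congr 1
    exact filter_congr (fun a _ => by simp [Nat.add_comm])
  have hdeg : ∀ i : Fin m,
      degA (fun i j : Fin m => decide (k + 1 ≤ sfun P i.val + sfun P j.val)) i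
        = cfun P (k + 1 - sfun P i.val) := by
    intro i
    have hsk : sfun P i.val ≤ k := sfun_le P i.val
    have ht1 : 1 ≤ k + 1 - sfun P i.val := by omega
    unfold degA
    have h1 : (univ.filter fun j : Fin m => decide (k + 1 ≤ sfun P i.val + sfun P j.val) = true)
        = univ.filter (fun j : Fin m => (k + 1 - sfun P i.val) ≤ sfun P j.val) :=
      filter_congr (fun j _ => by simp; omega)
    rw [h1, card_fin_filter m (fun n => (k + 1 - sfun P i.val) ≤ sfun P n),
      filter_range_eq P hP ht1, card_range]
  have himg : Finset.image
      (degA (fun i j : Fin m => decide (k + 1 ≤ sfun P i.val + sfun P j.val))) univ = P := by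
    ext q
    simp only [mem_image, mem_univ, true_and]
    constructor
    · rintro ⟨i, rfl⟩
      rw [hdeg i]
      have hs1 : 1 ≤ sfun P i.val := sfun_pos_of_lt_max P hP i.isLt
      have hsk : sfun P i.val ≤ k := sfun_le P i.val
      exact (cfun_props P hP hpos (by omega) (by omega)).1
    · intro hq
      obtain ⟨hcq, ht1⟩ := cfun_of_mem P hpos hq
      set t := sfun P (q - 1) with htdef
      have htk : t ≤ k := sfun_le P (q - 1)
      have ht'1 : 1 ≤ k + 1 - t := by omega
      have ht'k : k + 1 - t ≤ k := by omega
      obtain ⟨hc'P, _, hc'1⟩ := cfun_props P hP hpos ht'1 ht'k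
      set c' := cfun P (k + 1 - t) with hc'def
      have hc'm : c' ≤ m := P.le_max' c' hc'P
      have hm1 : 1 ≤ m := hpos _ (P.max'_mem hP)
      refine ⟨⟨c' - 1, by omega⟩, ?_⟩
      rw [hdeg ⟨c' - 1, by omega⟩]
      simp only [hc'1]
      rw [show k + 1 - (k + 1 - t) = t by omega]
      exact hcq
  exact ⟨himg, by rw [show (Finset.image
      (degB (fun i j : Fin m => decide (k + 1 ≤ sfun P i.val + sfun P j.val))) univ)
      = Finset.image
      (degA (fun i j : Fin m => decide (k + 1 ≤ sfun P i.val + sfun P j.val))) univ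
      from image_congr (fun i _ => hdegAB i)]; exact himg⟩
end

section
/- For every set 𝒫 = {p₁ > p₂ > … > p_k} of positive integers, there exists an l-graph of order p₁ whose degree set equals 𝒫. -/
open Finset

namespace Stmt14Aux

/-- Number of elements of `P` that are `≥ j`. -/
def F (P : Finset ℕ) (j : ℕ) : ℕ := (P.filter (fun p => j ≤ p)).card

/-- The columns with at least `m` ones. -/
def S (P : Finset ℕ) (n m : ℕ) : Finset ℕ := (Icc 1 n).filter (fun j => m ≤ F P j)

/-- max of `S`. -/
def g (P : Finset ℕ) (n m : ℕ) : ℕ := (S P n m).sup id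

variable {P : Finset ℕ} {n m : ℕ}

lemma F_anti {j j' : ℕ} (h : j ≤ j') : F P j' ≤ F P j := by
  apply card_le_card
  intro p hp
  rw [mem_filter] at *
  exact ⟨hp.1, by omega⟩

lemma F_le_card : F P j ≤ P.card := card_filter_le _ _

lemma F_succ_of_mem {p : ℕ} (hp : p ∈ P) : F P p = F P (p + 1) + 1 := by
  have h : P.filter (fun q => p ≤ q) = insert p (P.filter (fun q => p + 1 ≤ q)) := by
    ext q
    simp only [mem_filter, mem_insert]
    constructor
    · rintro ⟨hq, hle⟩
      rcases eq_or_lt_of_le hle with h | h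
      · exact Or.inl h.symm
      · exact Or.inr ⟨hq, h⟩
    · rintro (rfl | ⟨hq, hle⟩)
      · exact ⟨hp, le_rfl⟩
      · exact ⟨hq, by omega⟩
  rw [F, h, card_insert_of_notMem (by simp)]
  rfl

lemma F_pos (hn : n ∈ P) (hj : j ≤ n) (hj1 : 1 ≤ j) : 1 ≤ F P j := by
  apply card_pos.mpr
  exact ⟨n, mem_filter.mpr ⟨hn, hj⟩⟩

lemma F_one (hpos : ∀ p ∈ P, 0 < p) : F P 1 = P.card := by
  unfold F
  rw [filter_true_of_mem]
  intro p hp; exact hpos p hp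

lemma S_nonempty (hn : n ∈ P) (hn1 : 1 ≤ n) (hpos : ∀ p ∈ P, 0 < p)
    (hmk : m ≤ P.card) : (S P n m).Nonempty := by
  refine ⟨1, mem_filter.mpr ⟨mem_Icc.mpr ⟨le_rfl, hn1⟩, ?_⟩⟩
  rw [F_one hpos]; exact hmk

lemma g_mem_S (hn : n ∈ P) (hn1 : 1 ≤ n) (hpos : ∀ p ∈ P, 0 < p)
    (hmk : m ≤ P.card) : g P n m ∈ S P n m := by
  obtain ⟨b, hb, hs⟩ := Finset.exists_mem_eq_sup _ (S_nonempty hn hn1 hpos hmk) id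
  rw [g, hs]; exact hb

lemma le_g {j : ℕ} (hj : j ∈ S P n m) : j ≤ g P n m := Finset.le_sup (f := id) hj

lemma F_eq_zero_of_gt (hmax : ∀ p ∈ P, p ≤ n) : F P (n + 1) = 0 := by
  rw [F, card_eq_zero, filter_eq_empty_iff]
  intro p hp
  have := hmax p hp
  omega

/-- `g` is in `P`. -/
lemma g_mem_P (hn : n ∈ P) (hn1 : 1 ≤ n) (hmax : ∀ p ∈ P, p ≤ n)
    (hpos : ∀ p ∈ P, 0 < p) (hm1 : 1 ≤ m) (hmk : m ≤ P.card) : g P n m ∈ P := by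
  have hg := g_mem_S hn hn1 hpos hmk
  rw [S, mem_filter, mem_Icc] at hg
  obtain ⟨⟨hg1, hgn⟩, hF⟩ := hg
  -- F (g+1) < m
  have hF1 : F P (g P n m + 1) < m := by
    by_contra hcon
    push_neg at hcon
    rcases eq_or_lt_of_le hgn with h | h
    · have := F_eq_zero_of_gt hmax
      rw [h] at hcon
      omega
    · have : g P n m + 1 ∈ S P n m :=
        mem_filter.mpr ⟨mem_Icc.mpr ⟨by omega, by omega⟩, hcon⟩
      have := le_g this
      omega
  -- so the filters differ, giving an element equal to g
  have hsub : P.filter (fun p => g P n m + 1 ≤ p) ⊆ P.filter (fun p => g P n m ≤ p) := by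
    intro p hp
    rw [mem_filter] at *
    exact ⟨hp.1, by omega⟩
  have hne : P.filter (fun p => g P n m + 1 ≤ p) ≠ P.filter (fun p => g P n m ≤ p) := by
    intro h
    have : F P (g P n m) = F P (g P n m + 1) := by rw [F, F, h]
    omega
  obtain ⟨p, hpmem, hpnot⟩ := exists_of_ssubset (Finset.ssubset_iff_subset_ne.mpr ⟨hsub, hne⟩)
  rw [mem_filter] at hpmem
  rw [mem_filter] at hpnot
  have : p = g P n m := by
    by_contra hne'
    exact hpnot ⟨hpmem.1, by omega⟩
  rw [← this]; exact hpmem.1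

/-- `F (g m) = m`. -/
lemma F_g (hn : n ∈ P) (hn1 : 1 ≤ n) (hmax : ∀ p ∈ P, p ≤ n)
    (hpos : ∀ p ∈ P, 0 < p) (hm1 : 1 ≤ m) (hmk : m ≤ P.card) : F P (g P n m) = m := by
  have hg := g_mem_S hn hn1 hpos hmk
  rw [S, mem_filter, mem_Icc] at hg
  obtain ⟨⟨hg1, hgn⟩, hF⟩ := hg
  have hgP := g_mem_P hn hn1 hmax hpos hm1 hmk
  have hsucc := F_succ_of_mem hgP
  -- show F (g+1) < m as before
  have hF1 : F P (g P n m + 1) < m := by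
    by_contra hcon
    push_neg at hcon
    rcases eq_or_lt_of_le hgn with h | h
    · have := F_eq_zero_of_gt hmax
      rw [h] at hcon
      omega
    · have : g P n m + 1 ∈ S P n m :=
        mem_filter.mpr ⟨mem_Icc.mpr ⟨by omega, by omega⟩, hcon⟩
      have := le_g this
      omega
  omega

/-- For `p ∈ P`, `g (F p) = p`. -/
lemma g_F {p : ℕ} (hn : n ∈ P) (hmax : ∀ p ∈ P, p ≤ n)
    (hpos : ∀ p ∈ P, 0 < p) (hp : p ∈ P) : g P n (F P p) = p := by
  have hpn := hmax p hp
  have hp1 := hpos p hp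
  have hmem : p ∈ S P n (F P p) :=
    mem_filter.mpr ⟨mem_Icc.mpr ⟨hp1, hpn⟩, le_rfl⟩
  have hle : p ≤ g P n (F P p) := le_g hmem
  rcases eq_or_lt_of_le hle with h | h
  · exact h.symm
  · exfalso
    have hg := g_mem_S (m := F P p) hn (by omega) hpos (F_le_card (j := p))
    rw [S, mem_filter] at hg
    have h2 : F P (g P n (F P p)) ≤ F P (p + 1) := F_anti (by omega)
    have h3 := F_succ_of_mem hp
    have := hg.2
    omega

/-- `S` is an initial segment: `S = Icc 1 (g m)`, so its card is `g m`. -/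
lemma card_S (hn : n ∈ P) (hn1 : 1 ≤ n) (hmax : ∀ p ∈ P, p ≤ n)
    (hpos : ∀ p ∈ P, 0 < p) (hm1 : 1 ≤ m) (hmk : m ≤ P.card) :
    (S P n m).card = g P n m := by
  have hg := g_mem_S hn hn1 hpos hmk
  rw [S, mem_filter, mem_Icc] at hg
  obtain ⟨⟨hg1, hgn⟩, hF⟩ := hg
  have hs : S P n m = Icc 1 (g P n m) := by
    ext j
    rw [S, mem_filter, mem_Icc, mem_Icc]
    constructor
    · rintro ⟨⟨h1, h2⟩, h3⟩
      exact ⟨h1, le_g (mem_filter.mpr ⟨mem_Icc.mpr ⟨h1, h2⟩, h3⟩)⟩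
    · rintro ⟨h1, h2⟩
      refine ⟨⟨h1, by omega⟩, le_trans hF (F_anti h2)⟩
  rw [hs, Nat.card_Icc]
  omega

end Stmt14Aux

open Stmt14Aux

/-- For every set $\mathcal P$ of positive integers there is an l-graph of order
$\max \mathcal P$ (a symmetric Boolean relation, a loop contributing 1 to the degree)
whose degree set is $\mathcal P$. -/
theorem stmt_14 (P : Finset ℕ) (hP : P.Nonempty) (hpos : ∀ p ∈ P, 0 < p) :
    ∃ L : Fin (P.max' hP) → Fin (P.max' hP) → Bool, (∀ a b, L a b = L b a) ∧
      Finset.image (fun a => (univ.filter fun b => L a b = true).card) Finset.univ = P := by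
  set n := P.max' hP with hn_def
  have hn : n ∈ P := P.max'_mem hP
  have hmax : ∀ p ∈ P, p ≤ n := fun p hp => P.le_max' p hp
  have hn1 : 1 ≤ n := hpos n hn
  set k := P.card with hk_def
  refine ⟨fun a b => decide (k + 1 ≤ F P (a.val + 1) + F P (b.val + 1)), ?_, ?_⟩
  · intro a b
    simp only [decide_eq_decide]
    omega
  · -- compute the degree of each vertex
    have hdeg : ∀ a : Fin n,
        (univ.filter fun b : Fin n =>
          decide (k + 1 ≤ F P (a.val + 1) + F P (b.val + 1)) = true).card
        = g P n (k + 1 - F P (a.val + 1)) := by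
      intro a
      have hFi_le : F P (a.val + 1) ≤ k := F_le_card
      have hFi_pos : 1 ≤ F P (a.val + 1) := F_pos hn (by omega) (by omega)
      set m := k + 1 - F P (a.val + 1) with hm_def
      have hm1 : 1 ≤ m := by omega
      have hmk : m ≤ k := by omega
      rw [← card_S hn hn1 hmax hpos hm1 hmk]
      apply card_bij (fun (b : Fin n) _ => b.val + 1)
      · intro b hb
        simp only [mem_filter, mem_univ, decide_eq_true_eq, true_and] at hb
        refine mem_filter.mpr ⟨mem_Icc.mpr ⟨by omega, by omega⟩, by omega⟩
      · intro b1 _ b2 _ h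
        exact Fin.ext (by omega)
      · intro j hj
        rw [S, mem_filter, mem_Icc] at hj
        obtain ⟨⟨hj1, hj2⟩, hj3⟩ := hj
        refine ⟨⟨j - 1, by omega⟩, ?_, by simp only [Fin.val_mk]; omega⟩
        simp only [mem_filter, mem_univ, decide_eq_true_eq, true_and]
        have : j - 1 + 1 = j := by omega
        rw [this]
        omega
    apply Finset.Subset.antisymm
    · intro d hd
      simp only [mem_image, mem_univ, true_and] at hd
      obtain ⟨a, ha⟩ := hd
      rw [hdeg a] at ha
      have hFi_le : F P (a.val + 1) ≤ k := F_le_card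
      have hFi_pos : 1 ≤ F P (a.val + 1) := F_pos hn (by omega) (by omega)
      rw [← ha]
      exact g_mem_P hn hn1 hmax hpos (by omega) (by omega)
    · intro p hp
      have hFp_le : F P p ≤ k := F_le_card
      have hFp_pos : 1 ≤ F P p := F_pos hn (hmax p hp) (hpos p hp)
      set m := F P p with hm_def
      -- the vertex realizing degree p is g (k+1-m)
      have hm1' : 1 ≤ k + 1 - m := by omega
      have hmk' : k + 1 - m ≤ k := by omega
      have hi_mem : g P n (k + 1 - m) ∈ P := g_mem_P hn hn1 hmax hpos hm1' hmk'
      have hi_pos : 1 ≤ g P n (k + 1 - m) := hpos _ hi_mem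
      have hi_le : g P n (k + 1 - m) ≤ n := hmax _ hi_mem
      simp only [mem_image, mem_univ, true_and]
      refine ⟨⟨g P n (k + 1 - m) - 1, by omega⟩, ?_⟩
      rw [hdeg]
      simp only
      have h1 : g P n (k + 1 - m) - 1 + 1 = g P n (k + 1 - m) := by omega
      rw [h1, F_g hn hn1 hmax hpos hm1' hmk']
      have h2 : k + 1 - (k + 1 - m) = m := by omega
      rw [h2, hm_def, g_F hn hmax hpos hp]
end

section
/- Every set 𝒫 = {p₁ > p₂ > … > p_k} of positive integers is the degree set of some simple graph of order p₁ + 1. -/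
open Finset

/-- number of "dominating" indices strictly between `v` and `n`. -/
def dcnt (c : ℕ → Bool) (n v : ℕ) : ℕ := ((Finset.Ioo v n).filter (fun u => c u)).card

/-- intended degree of vertex `v` in the creation-sequence graph. -/
def ndeg (c : ℕ → Bool) (n v : ℕ) : ℕ := (if c v then v else 0) + dcnt c n v

/-- the creation-sequence (threshold) graph on `Fin n`. -/
def tGraph (c : ℕ → Bool) (n : ℕ) : SimpleGraph (Fin n) where
  Adj i j := i ≠ j ∧ c (max i.val j.val)
  symm := by
    constructor
    intro i j ⟨h1, h2⟩
    exact ⟨h1.symm, by rwa [max_comm]⟩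
  loopless := by constructor; intro i ⟨h1, _⟩; exact h1 rfl

instance (c : ℕ → Bool) (n : ℕ) : DecidableRel (tGraph c n).Adj := by
  intro i j; unfold tGraph; simp only; infer_instance

lemma tGraph_degree (c : ℕ → Bool) (n : ℕ) (v : Fin n) :
    (tGraph c n).degree v = ndeg c n v.val := by
  classical
  rw [SimpleGraph.degree, ← Finset.card_image_of_injective _ Fin.val_injective]
  have himg : ((tGraph c n).neighborFinset v).image Fin.val
      = ((Finset.range v.val).filter (fun _ => c v.val))
        ∪ ((Finset.Ioo v.val n).filter (fun u => c u)) := by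
    ext m
    simp only [Finset.mem_image, SimpleGraph.mem_neighborFinset, Finset.mem_union,
      Finset.mem_filter, Finset.mem_range, Finset.mem_Ioo]
    simp only [tGraph]
    constructor
    · rintro ⟨u, ⟨hne, hcu⟩, rfl⟩
      have hne' : v.val ≠ u.val := fun h => hne (Fin.val_injective h)
      rcases lt_or_gt_of_ne hne' with h | h
      · right
        refine ⟨⟨h, u.isLt⟩, ?_⟩
        rwa [max_eq_right h.le] at hcu
      · left
        refine ⟨h, ?_⟩
        rwa [max_eq_left h.le] at hcu
    · rintro (⟨hm, hcv⟩ | ⟨⟨hm, hmn⟩, hcm⟩)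
      · exact ⟨⟨m, hm.trans v.isLt⟩, ⟨fun h => absurd (congrArg Fin.val h) (by simp; omega),
          by simpa [max_eq_left hm.le] using hcv⟩, rfl⟩
      · exact ⟨⟨m, hmn⟩, ⟨fun h => absurd (congrArg Fin.val h) (by simp; omega),
          by simpa [max_eq_right hm.le] using hcm⟩, rfl⟩
  rw [himg, Finset.card_union_of_disjoint, ndeg, dcnt, Finset.filter_const]
  · congr 1
    split <;> simp
  · intro s hs1 hs2
    change s ⊆ _ at hs1 hs2 ⊢
    intro x hx
    have h1 := hs1 hx
    have h2 := hs2 hx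
    simp only [Finset.mem_filter, Finset.mem_range, Finset.mem_Ioo] at h1 h2
    omega

lemma dcnt_all_true {c : ℕ → Bool} {n v : ℕ} (h : ∀ u, v < u → u < n → c u = true) :
    dcnt c n v = n - v - 1 := by
  rw [dcnt, Finset.filter_true_of_mem, Nat.card_Ioo]
  intro u hu
  rw [Finset.mem_Ioo] at hu
  exact h u hu.1 hu.2

lemma exists_c (k : ℕ) : ∀ P : Finset ℕ, P.card = k → ∀ hP : P.Nonempty,
    (∀ p ∈ P, 0 < p) →
    ∃ c : ℕ → Bool,
      (Finset.range (P.max' hP + 1)).image (ndeg c (P.max' hP + 1)) = P := by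
  induction k using Nat.strong_induction_on with
  | _ k IH =>
  intro P hcard hP hpos
  set b := P.max' hP with hb
  set a := P.min' hP with ha
  have hab : a ≤ b := P.min'_le b (P.max'_mem hP)
  have hapos : 0 < a := hpos _ (P.min'_mem hP)
  have haP : a ∈ P := P.min'_mem hP
  have hbP : b ∈ P := P.max'_mem hP
  by_cases hab' : a = b
  · -- singleton case: complete graph
    have hPb : P = {b} := by
      apply Finset.eq_singleton_iff_unique_mem.mpr
      exact ⟨hbP, fun x hx => le_antisymm (P.le_max' x hx) (hab' ▸ P.min'_le x hx)⟩
    refine ⟨fun _ => true, ?_⟩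
    rw [hPb]
    ext d
    simp only [Finset.mem_image, Finset.mem_range, Finset.mem_singleton]
    constructor
    · rintro ⟨v, hv, rfl⟩
      rw [ndeg, dcnt_all_true (fun _ _ _ => rfl)]
      simp only [if_pos]
      omega
    · rintro rfl
      refine ⟨b, by omega, ?_⟩
      rw [ndeg, dcnt_all_true (fun _ _ _ => rfl)]
      simp only [if_pos]
      omega
  · have haltb : a < b := lt_of_le_of_ne hab hab'
    set Q : Finset ℕ := (P.erase b).erase a with hQdef
    have hQmem : ∀ x, x ∈ Q ↔ x ∈ P ∧ a < x ∧ x < b := by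
      intro x
      simp only [hQdef, Finset.mem_erase]
      constructor
      · rintro ⟨hxa, hxb, hxP⟩
        exact ⟨hxP, lt_of_le_of_ne (P.min'_le x hxP) (Ne.symm hxa),
          lt_of_le_of_ne (P.le_max' x hxP) hxb⟩
      · rintro ⟨hxP, h1, h2⟩
        exact ⟨by omega, by omega, hxP⟩
    have hPQ : ∀ x, x ∈ P ↔ x ∈ Q ∨ x = a ∨ x = b := by
      intro x
      rw [hQmem]
      constructor
      · intro hx
        have h1 := P.min'_le x hx
        have h2 := P.le_max' x hx
        rcases eq_or_lt_of_le h1 with h | h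
        · right; left; omega
        rcases eq_or_lt_of_le h2 with h' | h'
        · right; right; omega
        · left; exact ⟨hx, h, h'⟩
      · rintro (⟨h, _⟩ | rfl | rfl) <;> assumption
    by_cases hQ : Q = ∅
    · -- two-element case
      have hPab : ∀ x, x ∈ P ↔ x = a ∨ x = b := by
        intro x
        rw [hPQ x, hQ]
        simp
      set c : ℕ → Bool := fun v => decide (b + 1 - a ≤ v) with hc
      refine ⟨c, ?_⟩
      have hdeg : ∀ v < b + 1, ndeg c (b + 1) v = if b + 1 - a ≤ v then b else a := by
        intro v hv
        by_cases hva : b + 1 - a ≤ v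
        · rw [if_pos hva, ndeg, dcnt_all_true (fun u hu _ => by simp [hc]; omega)]
          simp only [hc, decide_eq_true_eq]
          rw [if_pos hva]
          omega
        · rw [if_neg hva, ndeg, hc]
          simp only [decide_eq_true_eq]
          rw [if_neg hva, dcnt]
          have : (Finset.Ioo v (b+1)).filter (fun u => decide (b + 1 - a ≤ u))
              = Finset.Ico (b + 1 - a) (b + 1) := by
            ext u
            simp only [Finset.mem_filter, Finset.mem_Ioo, Finset.mem_Ico,
              decide_eq_true_eq]
            omega
          rw [this, Nat.card_Ico]
          omega
      ext d
      simp only [Finset.mem_image, Finset.mem_range]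
      constructor
      · rintro ⟨v, hv, rfl⟩
        rw [hdeg v hv, hPab]
        split <;> simp
      · intro hd
        rcases (hPab d).mp hd with rfl | rfl
        · exact ⟨0, by omega, by rw [hdeg 0 (by omega), if_neg (by omega)]⟩
        · exact ⟨b, by omega, by rw [hdeg b (by omega), if_pos (by omega)]⟩
    · -- recursive case
      have hQne : Q.Nonempty := Finset.nonempty_iff_ne_empty.mpr hQ
      set b₂ := Q.max' hQne with hb2
      have hb2Q : b₂ ∈ Q := Q.max'_mem hQne
      obtain ⟨hb2P, hab2, hb2b⟩ := (hQmem b₂).mp hb2Q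
      set P' : Finset ℕ := Q.image (fun x => x - a) with hP'
      have hP'ne : P'.Nonempty := ⟨b₂ - a, Finset.mem_image_of_mem _ hb2Q⟩
      have hP'pos : ∀ p ∈ P', 0 < p := by
        intro p hp
        rw [hP', Finset.mem_image] at hp
        obtain ⟨q, hq, rfl⟩ := hp
        have := (hQmem q).mp hq
        omega
      have hk2 : 2 ≤ k := by
        have hsub : ({a, b} : Finset ℕ) ⊆ P := by
          intro x hx
          rcases Finset.mem_insert.mp hx with rfl | hx
          · exact haP
          · rw [Finset.mem_singleton] at hx; subst hx; exact hbP
        have := Finset.card_le_card hsub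
        rw [Finset.card_insert_of_notMem (by simp; omega), Finset.card_singleton,
          hcard] at this
        omega
      have hcardQ : Q.card = k - 2 := by
        rw [hQdef, Finset.card_erase_of_mem (Finset.mem_erase.mpr ⟨by omega, haP⟩),
          Finset.card_erase_of_mem hbP, hcard]
        omega
      have hcardP' : P'.card = k - 2 := by
        rw [hP', Finset.card_image_of_injOn, hcardQ]
        intro x hx y hy hxy
        have h1 := (hQmem x).mp hx
        have h2 := (hQmem y).mp hy
        simp only at hxy
        omega
      have hmax' : P'.max' hP'ne = b₂ - a := by
        apply le_antisymm
        · apply Finset.max'_le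
          intro x hx
          rw [hP', Finset.mem_image] at hx
          obtain ⟨q, hq, rfl⟩ := hx
          have hqle := Q.le_max' q hq
          omega
        · exact P'.le_max' _ (Finset.mem_image_of_mem _ hb2Q)
      obtain ⟨c', hc'⟩ := IH (k - 2) (by omega) P' hcardP' hP'ne hP'pos
      rw [hmax'] at hc'
      set n' := b₂ - a + 1 with hn'
      have hn'lt : n' < b + 1 - a := by omega
      set c : ℕ → Bool :=
        fun v => if b + 1 - a ≤ v then true else if n' ≤ v then false else c' v with hc
      refine ⟨c, ?_⟩
      have hcchar : ∀ u, n' ≤ u → (c u = true ↔ b + 1 - a ≤ u) := by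
        intro u hu
        constructor
        · intro h
          by_contra h1
          simp only [hc] at h
          rw [if_neg h1, if_pos hu] at h
          exact absurd h (by simp)
        · intro h1
          simp only [hc]
          rw [if_pos h1]
      have hcbot : ∀ u, u < n' → c u = c' u := by
        intro u hu
        simp only [hc]
        rw [if_neg (by omega : ¬ b + 1 - a ≤ u), if_neg (by omega : ¬ n' ≤ u)]
      have hdeg_top : ∀ v, b + 1 - a ≤ v → v < b + 1 → ndeg c (b+1) v = b := by
        intro v hv1 hv2
        rw [ndeg, dcnt_all_true (fun u hu1 hu2 => ((hcchar u (by omega)).mpr (by omega))),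
          if_pos ((hcchar v (by omega)).mpr hv1)]
        omega
      have hIcofilter : (Finset.Ico n' (b+1)).filter (fun u => c u)
          = Finset.Ico (b+1-a) (b+1) := by
        ext u
        simp only [Finset.mem_filter, Finset.mem_Ico]
        constructor
        · rintro ⟨⟨h1, h2⟩, h3⟩
          exact ⟨(hcchar u h1).mp h3, h2⟩
        · rintro ⟨h1, h2⟩
          exact ⟨⟨by omega, h2⟩, (hcchar u (by omega)).mpr h1⟩
      have hdeg_mid : ∀ v, n' ≤ v → v < b + 1 - a → ndeg c (b+1) v = a := by
        intro v hv1 hv2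
        have hcv : c v = false := by
          rcases Bool.eq_false_or_eq_true (c v) with h | h
          · exact absurd ((hcchar v hv1).mp h) (by omega)
          · exact h
        rw [ndeg, hcv, if_neg (by simp), dcnt]
        have : (Finset.Ioo v (b+1)).filter (fun u => c u)
            = Finset.Ico (b+1-a) (b+1) := by
          ext u
          simp only [Finset.mem_filter, Finset.mem_Ioo, Finset.mem_Ico]
          constructor
          · rintro ⟨⟨h1, h2⟩, h3⟩
            exact ⟨(hcchar u (by omega)).mp h3, h2⟩
          · rintro ⟨h1, h2⟩
            exact ⟨⟨by omega, h2⟩, (hcchar u (by omega)).mpr h1⟩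
        rw [this, Nat.card_Ico]
        omega
      have hdeg_bot : ∀ v, v < n' → ndeg c (b+1) v = ndeg c' n' v + a := by
        intro v hv
        have hsplit : Finset.Ioo v (b+1) = Finset.Ioo v n' ∪ Finset.Ico n' (b+1) := by
          ext x
          simp only [Finset.mem_union, Finset.mem_Ioo, Finset.mem_Ico]
          omega
        have hdisj : Disjoint ((Finset.Ioo v n').filter (fun u => c u))
            ((Finset.Ico n' (b+1)).filter (fun u => c u)) := by
          apply Finset.disjoint_filter_filter
          rw [Finset.disjoint_left]
          intro x hx1 hx2
          rw [Finset.mem_Ioo] at hx1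
          rw [Finset.mem_Ico] at hx2
          omega
        have hfbot : (Finset.Ioo v n').filter (fun u => c u)
            = (Finset.Ioo v n').filter (fun u => c' u) := by
          apply Finset.filter_congr
          intro u hu
          rw [Finset.mem_Ioo] at hu
          rw [hcbot u hu.2]
        rw [ndeg, ndeg, dcnt, dcnt, hsplit, Finset.filter_union,
          Finset.card_union_of_disjoint hdisj, hfbot, hIcofilter, Nat.card_Ico,
          hcbot v hv]
        omega
      ext d
      simp only [Finset.mem_image, Finset.mem_range]
      constructor
      · rintro ⟨v, hv, rfl⟩
        by_cases h1 : b + 1 - a ≤ v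
        · rw [hdeg_top v h1 hv]; exact hbP
        · by_cases h2 : n' ≤ v
          · rw [hdeg_mid v h2 (by omega)]; exact haP
          · rw [hdeg_bot v (by omega)]
            have hmem : ndeg c' n' v ∈ P' := by
              rw [← hc']
              exact Finset.mem_image_of_mem _ (Finset.mem_range.mpr (by omega))
            rw [hP', Finset.mem_image] at hmem
            obtain ⟨q, hq, heq⟩ := hmem
            have hqf := (hQmem q).mp hq
            rw [← heq]
            have : q - a + a = q := by omega
            rw [this]
            exact hqf.1
      · intro hd
        rcases (hPQ d).mp hd with hdQ | rfl | rfl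
        · have hdf := (hQmem d).mp hdQ
          have hmem : d - a ∈ P' := Finset.mem_image_of_mem _ hdQ
          rw [← hc', Finset.mem_image] at hmem
          obtain ⟨v, hv, heq⟩ := hmem
          rw [Finset.mem_range] at hv
          refine ⟨v, by omega, ?_⟩
          rw [hdeg_bot v hv, heq]
          omega
        · exact ⟨n', by omega, hdeg_mid n' le_rfl hn'lt⟩
        · exact ⟨b, by omega, hdeg_top b (by omega) (by omega)⟩

/-- Kapoor–Polimeni–Wall: every set of positive integers with maximum `p₁` is the
degree set of a simple graph of order `p₁ + 1`. -/
theorem stmt_15 (P : Finset ℕ) (hP : P.Nonempty) (hpos : ∀ p ∈ P, 0 < p) :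
    ∃ (G : SimpleGraph (Fin (P.max' hP + 1))) (h : DecidableRel G.Adj),
      Finset.image (fun v => @SimpleGraph.degree _ G v
        (@SimpleGraph.neighborSetFintype _ G _ h v)) Finset.univ = P := by
  obtain ⟨c, hc⟩ := exists_c P.card P rfl hP hpos
  refine ⟨tGraph c _, inferInstance, ?_⟩
  ext d
  rw [show (d ∈ P) = (d ∈ (Finset.range (P.max' hP + 1)).image (ndeg c (P.max' hP + 1))) from by rw [hc]]
  simp only [Finset.mem_image, Finset.mem_univ, Finset.mem_range, true_and]
  constructor
  · rintro ⟨v, hv⟩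
    exact ⟨v.val, v.isLt, by rw [← tGraph_degree]; exact hv⟩
  · rintro ⟨m, hm, hd⟩
    exact ⟨⟨m, hm⟩, by rw [tGraph_degree]; exact hd⟩
end
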